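/- arXiv:1607.07491 — 12 statements merged into one kernel-verified Lean document; each statement's English description precedes it below -/
import Mathlib

section
/- Let k be a positive integer, r ∈ [k-1], and (d,d') a pair of integers with |d|,|d'| ≤ k-1 and (d,d') ≠ (0,0). Then the number of k×k permutation matrices in which the vector (d,d') occurs as the distance vector of at least r pairs of 1-entries is at most k!/r!. -/
open Asymptotics

noncomputable section

/-- Number of 1-entries of a binary matrix. -/
def ones {n m : ℕ} (A : Fin n → Fin m → Bool) : ℕ :=
  Nat.card {p : Fin n × Fin m // A p.1 p.2 = true}

/-- Number of 0-entries of a binary matrix. -/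
def zeros {n m : ℕ} (A : Fin n → Fin m → Bool) : ℕ :=
  Nat.card {p : Fin n × Fin m // A p.1 p.2 = false}

/-- `B` is contained in `A`: `B` can be obtained from `A` by deleting rows/columns
and turning some 1-entries into 0-entries. -/
def containsB {a b n m : ℕ} (B : Fin a → Fin b → Bool) (A : Fin n → Fin m → Bool) : Prop :=
  ∃ f : Fin a → Fin n, ∃ g : Fin b → Fin m, StrictMono f ∧ StrictMono g ∧
    ∀ i j, B i j = true → A (f i) (g j) = true

/-- The permutation matrix of a permutation `σ`. -/
def permMat {k : ℕ} (σ : Equiv.Perm (Fin k)) : Fin k → Fin k → Bool :=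
  fun i j => decide (σ i = j)

/-- `A` contains the permutation matrix of `σ`. -/
def containsP {k n m : ℕ} (σ : Equiv.Perm (Fin k)) (A : Fin n → Fin m → Bool) : Prop :=
  containsB (permMat σ) A

/-- `ex(n,P)`: the maximum number of 1-entries in an `n × n` binary matrix avoiding
the permutation matrix of `σ`. -/
def exP {k : ℕ} (n : ℕ) (σ : Equiv.Perm (Fin k)) : ℕ :=
  sSup {c : ℕ | ∃ A : Fin n → Fin n → Bool, ¬ containsP σ A ∧ c = ones A}

/-- The number of (ordered) pairs of 1-entries of the permutation matrix of `σ`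
whose distance vector is `(d, d')`. -/
def pairCount {k : ℕ} (σ : Equiv.Perm (Fin k)) (d d' : ℤ) : ℕ :=
  Nat.card {p : Fin k × Fin k //
    ((p.2).val : ℤ) - ((p.1).val : ℤ) = d ∧ ((σ p.2).val : ℤ) - ((σ p.1).val : ℤ) = d'}

/-- Bottom of the chain of `n` under repeated subtraction of `e`, stopping when the
current index (as an element of `Fin k`) is not in `S`. -/
def chainBot (k e : ℕ) (S : Finset (Fin k)) : ℕ → ℕ
  | n =>
    if h : ∃ hn : n < k, (⟨n, hn⟩ : Fin k) ∈ S ∧ 1 ≤ e ∧ e ≤ n then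
      chainBot k e S (n - e)
    else n
  termination_by n => n
  decreasing_by
    obtain ⟨hn, _, h1, h2⟩ := h
    omega

lemma chainBot_spec (k e : ℕ) (he : 1 ≤ e) (S : Finset (Fin k))
    (hS : ∀ j ∈ S, e ≤ j.val) (n : ℕ) :
    n < k → ∃ t : ℕ,
      chainBot k e S n ≤ n ∧
      (∀ hb : chainBot k e S n < k, (⟨chainBot k e S n, hb⟩ : Fin k) ∉ S) ∧
      ∀ (e' : ℕ) (f : ℕ → ℕ),
        (∀ m (hm : m < k), (⟨m, hm⟩ : Fin k) ∈ S → f m = f (m - e) + e') →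
        f n = f (chainBot k e S n) + t * e' := by
  induction n using Nat.strong_induction_on with
  | _ n ih =>
    intro hn
    rw [chainBot]
    split
    · next h =>
      obtain ⟨hn', hmem, h1, h2⟩ := h
      obtain ⟨t, hle, hnot, hval⟩ := ih (n - e) (by omega) (by omega)
      refine ⟨t + 1, by omega, hnot, ?_⟩
      intro e' f hf
      have h3 : f n = f (n - e) + e' := hf n hn hmem
      have h4 := hval e' f hf
      rw [h3, h4]; ring
    · next h =>
      refine ⟨0, le_rfl, ?_, ?_⟩
      · intro hb hmem
        exact h ⟨hn, hmem, he, hS _ hmem⟩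
      · intro e' f hf; simp

lemma chainBot_eq_self (k e : ℕ) (S : Finset (Fin k)) (b : Fin k) (hb : b ∉ S) :
    chainBot k e S b.val = b.val := by
  rw [chainBot]
  rw [dif_neg]
  rintro ⟨hn, hmem, -, -⟩
  exact hb (by simpa using hmem)

lemma le_aux (k e' : ℕ) (S : Finset (Fin k)) (σ τ : Equiv.Perm (Fin k))
    (B : Fin k → Fin k) (t : Fin k → ℕ)
    (hBnotS : ∀ p, B p ∉ S)
    (hBself : ∀ b, b ∉ S → B b = b)
    (Hσ : ∀ p, (σ p).val = (σ (B p)).val + t p * e')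
    (Hτ : ∀ p, (τ p).val = (τ (B p)).val + t p * e')
    (b : Fin k) (hb : b ∉ S)
    (sIH : ∀ b', b' ∉ S → σ b' < σ b → σ b' = τ b') :
    (σ b).val ≤ (τ b).val := by
  by_contra hcon
  push_neg at hcon
  set p := σ.symm (τ b) with hp
  have hσp : σ p = τ b := σ.apply_symm_apply _
  have h1 : (σ (B p)).val ≤ (σ p).val := by rw [Hσ p]; exact Nat.le_add_right _ _
  have h2 : (σ (B p)).val < (σ b).val := by
    have := congrArg Fin.val hσp
    omega
  have hlt : σ (B p) < σ b := h2
  have heq : σ (B p) = τ (B p) := sIH _ (hBnotS p) hlt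
  have hστp : (σ p).val = (τ p).val := by rw [Hσ p, Hτ p, heq]
  have hpeq : τ p = τ b := by
    apply Fin.val_injective
    rw [← hστp]
    exact congrArg Fin.val hσp
  have hpb : p = b := τ.injective hpeq
  rw [hpb, hBself b hb] at h2
  omega

lemma key_eq (k e e' : ℕ) (he : 1 ≤ e) (S : Finset (Fin k)) (hS : ∀ j ∈ S, e ≤ j.val)
    (σ τ : Equiv.Perm (Fin k))
    (hσ : ∀ j : Fin k, j ∈ S →
      (σ j).val = (σ (⟨j.val - e, Nat.lt_of_le_of_lt (Nat.sub_le _ _) j.isLt⟩ : Fin k)).val + e')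
    (hτ : ∀ j : Fin k, j ∈ S →
      (τ j).val = (τ (⟨j.val - e, Nat.lt_of_le_of_lt (Nat.sub_le _ _) j.isLt⟩ : Fin k)).val + e')
    (hpat : ∀ b b' : Fin k, b ∉ S → b' ∉ S → (σ b < σ b' ↔ τ b < τ b')) :
    σ = τ := by
  classical
  choose t hle hnot hval using fun p : Fin k => chainBot_spec k e he S hS p.val p.isLt
  set B : Fin k → Fin k := fun p => ⟨chainBot k e S p.val, lt_of_le_of_lt (hle p) p.isLt⟩ with hB
  have hBnotS : ∀ p, B p ∉ S := fun p => hnot p _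
  have hBself : ∀ b : Fin k, b ∉ S → B b = b := by
    intro b hb
    apply Fin.val_injective
    exact chainBot_eq_self k e S b hb
  -- value transport for σ
  have Hgen : ∀ (ρ : Equiv.Perm (Fin k)),
      (∀ j : Fin k, j ∈ S →
        (ρ j).val = (ρ (⟨j.val - e, Nat.lt_of_le_of_lt (Nat.sub_le _ _) j.isLt⟩ : Fin k)).val + e') →
      ∀ p, (ρ p).val = (ρ (B p)).val + t p * e' := by
    intro ρ hρ p
    have hf : ∀ m (hm : m < k), (⟨m, hm⟩ : Fin k) ∈ S →
        (fun n => if h : n < k then (ρ ⟨n, h⟩).val else 0) m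
          = (fun n => if h : n < k then (ρ ⟨n, h⟩).val else 0) (m - e) + e' := by
      intro m hm hmem
      simp only [dif_pos hm, dif_pos (show m - e < k by omega)]
      exact hρ ⟨m, hm⟩ hmem
    have := hval p e' (fun n => if h : n < k then (ρ ⟨n, h⟩).val else 0) hf
    simpa [dif_pos p.isLt, dif_pos (lt_of_le_of_lt (hle p) p.isLt)] using this
  have Hσ := Hgen σ hσ
  have Hτ := Hgen τ hτ
  have claim1 : ∀ v : ℕ, ∀ b : Fin k, b ∉ S → (σ b).val = v → σ b = τ b := by
    intro v
    induction v using Nat.strong_induction_on with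
    | _ v ih =>
      intro b hb hv
      have sIH : ∀ b', b' ∉ S → σ b' < σ b → σ b' = τ b' := by
        intro b' hb' hlt
        have hlt' : (σ b').val < (σ b).val := hlt
        exact ih (σ b').val (by omega) b' hb' rfl
      have tIH : ∀ b', b' ∉ S → τ b' < τ b → τ b' = σ b' := by
        intro b' hb' hlt
        exact (sIH b' hb' ((hpat b' b hb' hb).mpr hlt)).symm
      have h1 : (σ b).val ≤ (τ b).val :=
        le_aux k e' S σ τ B t hBnotS hBself Hσ Hτ b hb sIH
      have h2 : (τ b).val ≤ (σ b).val :=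
        le_aux k e' S τ σ B t hBnotS hBself Hτ Hσ b hb tIH
      exact Fin.val_injective (le_antisymm h1 h2)
  apply Equiv.ext
  intro p
  have h1 : σ (B p) = τ (B p) := claim1 _ (B p) (hBnotS p) rfl
  have h2 : (σ p).val = (τ p).val := by rw [Hσ p, Hτ p, h1]
  exact Fin.val_injective h2

open Finset in
lemma cardA_le (k r : ℕ) (hk : 1 ≤ k) (hr2 : r ≤ k - 1) (e e' : ℕ) (he : 1 ≤ e)
    (S : Finset (Fin k)) (hScard : S.card = r) :
    (Finset.univ.filter (fun σ : Equiv.Perm (Fin k) =>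
        ∀ j ∈ S, e ≤ j.val ∧ (σ j).val =
          (σ (⟨j.val - e, Nat.lt_of_le_of_lt (Nat.sub_le _ _) j.isLt⟩ : Fin k)).val + e')).card
      ≤ (k - r).factorial := by
  classical
  by_cases hS : ∀ j ∈ S, e ≤ j.val
  swap
  · push_neg at hS
    obtain ⟨j, hj, hje⟩ := hS
    have : (Finset.univ.filter (fun σ : Equiv.Perm (Fin k) =>
        ∀ j ∈ S, e ≤ j.val ∧ (σ j).val =
          (σ (⟨j.val - e, Nat.lt_of_le_of_lt (Nat.sub_le _ _) j.isLt⟩ : Fin k)).val + e')) = ∅ := by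
      apply Finset.eq_empty_of_forall_notMem
      intro σ hσ
      rw [Finset.mem_filter] at hσ
      exact absurd (hσ.2 j hj).1 (by omega)
    rw [this]
    simp
  -- main case
  have hkr : 1 ≤ k - r := by omega
  set W : Finset (Fin k) := Sᶜ with hW
  have hWcard : W.card = k - r := by
    rw [hW, Finset.card_compl, hScard, Fintype.card_fin]
  have hWmem : ∀ b : Fin k, b ∈ W ↔ b ∉ S := by simp [hW]
  -- rank function
  set rk : Equiv.Perm (Fin k) → Fin k → ℕ :=
    fun σ b => (W.filter (fun b' => σ b' < σ b)).card with hrk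
  have hrklt : ∀ σ : Equiv.Perm (Fin k), ∀ b : Fin k, b ∈ W → rk σ b < k - r := by
    intro σ b hb
    have hsub : W.filter (fun b' => σ b' < σ b) ⊆ W.erase b := by
      intro c hc
      rw [Finset.mem_filter] at hc
      rw [Finset.mem_erase]
      refine ⟨?_, hc.1⟩
      rintro rfl
      exact lt_irrefl _ hc.2
    calc rk σ b ≤ (W.erase b).card := Finset.card_le_card hsub
    _ = W.card - 1 := Finset.card_erase_of_mem hb
    _ < k - r := by omega
  have rk_lt_iff : ∀ σ : Equiv.Perm (Fin k), ∀ b ∈ W, ∀ b' ∈ W,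
      (σ b < σ b' ↔ rk σ b < rk σ b') := by
    intro σ b hb b' hb'
    constructor
    · intro hlt
      apply Finset.card_lt_card
      rw [Finset.ssubset_iff_of_subset]
      · exact ⟨b, Finset.mem_filter.mpr ⟨hb, hlt⟩,
          fun hc => absurd (Finset.mem_filter.mp hc).2 (lt_irrefl _)⟩
      · intro c hc
        rw [Finset.mem_filter] at hc ⊢
        exact ⟨hc.1, hc.2.trans hlt⟩
    · intro hlt
      by_contra hcon
      rcases lt_or_eq_of_le (not_lt.mp hcon) with h | h
      · have : rk σ b' < rk σ b := by
          apply Finset.card_lt_card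
          rw [Finset.ssubset_iff_of_subset]
          · exact ⟨b', Finset.mem_filter.mpr ⟨hb', h⟩,
              fun hc => absurd (Finset.mem_filter.mp hc).2 (lt_irrefl _)⟩
          · intro c hc
            rw [Finset.mem_filter] at hc ⊢
            exact ⟨hc.1, hc.2.trans h⟩
        omega
      · have : b' = b := σ.injective h
        subst this
        omega
  -- the embedding map
  set Φ : Equiv.Perm (Fin k) → ({x // x ∈ W} ↪ Fin (k - r)) :=
    fun σ => ⟨fun b => ⟨rk σ b.1, hrklt σ b.1 b.2⟩, by
      intro b b' hbb
      have h1 : rk σ b.1 = rk σ b'.1 := by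
        simpa using congrArg Fin.val hbb
      have h2 : σ b.1 = σ b'.1 := by
        apply le_antisymm
        · by_contra hcon
          have := (rk_lt_iff σ b'.1 b'.2 b.1 b.2).mp (not_le.mp hcon)
          omega
        · by_contra hcon
          have := (rk_lt_iff σ b.1 b.2 b'.1 b'.2).mp (not_le.mp hcon)
          omega
      exact Subtype.ext (σ.injective h2)⟩ with hΦ
  refine le_trans (Finset.card_le_card_of_injOn
    (t := (Finset.univ : Finset ({x // x ∈ W} ↪ Fin (k - r)))) Φ
    (fun a _ => Finset.mem_univ _) ?_) ?_
  swap
  · calc (Finset.univ : Finset ({x // x ∈ W} ↪ Fin (k - r))).card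
        = Fintype.card ({x // x ∈ W} ↪ Fin (k - r)) := Finset.card_univ
    _ = (k - r).descFactorial (Fintype.card {x // x ∈ W}) := by
        rw [Fintype.card_embedding_eq, Fintype.card_fin]
    _ = (k - r).descFactorial (k - r) := by rw [Fintype.card_coe, hWcard]
    _ ≤ (k - r).factorial := le_of_eq (Nat.descFactorial_self _)
  · -- injectivity on the filter set
    intro σ hσ τ hτ hΦeq
    simp only [Finset.coe_filter, Set.mem_setOf_eq, Finset.mem_univ, true_and] at hσ hτ
    have hpat : ∀ b b' : Fin k, b ∉ S → b' ∉ S → (σ b < σ b' ↔ τ b < τ b') := by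
      intro b b' hb hb'
      have hbW : b ∈ W := (hWmem b).mpr hb
      have hb'W : b' ∈ W := (hWmem b').mpr hb'
      have hrkeq : ∀ c : {x // x ∈ W}, rk σ c.1 = rk τ c.1 := by
        intro c
        have := congrFun (congrArg (fun (f : {x // x ∈ W} ↪ Fin (k - r)) => (f : {x // x ∈ W} → Fin (k - r))) hΦeq) c
        exact congrArg Fin.val this
      rw [rk_lt_iff σ b hbW b' hb'W, rk_lt_iff τ b hbW b' hb'W,
        hrkeq ⟨b, hbW⟩, hrkeq ⟨b', hb'W⟩]
    exact key_eq k e e' he S hS σ τ (fun j hj => (hσ j hj).2) (fun j hj => (hτ j hj).2) hpat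

open Finset in
lemma main_case (k r : ℕ) (hk : 1 ≤ k) (hr2 : r ≤ k - 1)
    (d d' : ℤ) (hd : 0 < d) (hd' : 0 < d') :
    Nat.card {σ : Equiv.Perm (Fin k) // r ≤ pairCount σ d d'} ≤
      k.factorial / r.factorial := by
  classical
  set e := d.toNat with hee
  set e' := d'.toNat with hee'
  have hde : (e : ℤ) = d := Int.toNat_of_nonneg hd.le
  have hde' : (e' : ℤ) = d' := Int.toNat_of_nonneg hd'.le
  have he : 1 ≤ e := by omega
  set Pred : Equiv.Perm (Fin k) → Fin k → Prop := fun σ j =>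
    e ≤ j.val ∧ (σ j).val =
      (σ (⟨j.val - e, Nat.lt_of_le_of_lt (Nat.sub_le _ _) j.isLt⟩ : Fin k)).val + e' with hPred
  have hle : ∀ σ : Equiv.Perm (Fin k),
      pairCount σ d d' ≤ (Finset.univ.filter (Pred σ)).card := by
    intro σ
    have h1 : Nat.card {j : Fin k // Pred σ j} = (Finset.univ.filter (Pred σ)).card := by
      rw [Nat.card_eq_fintype_card, Fintype.card_subtype]
    rw [pairCount, ← h1]
    apply Nat.card_le_card_of_injective
      (f := fun p : {p : Fin k × Fin k //
          ((p.2).val : ℤ) - ((p.1).val : ℤ) = d ∧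
          ((σ p.2).val : ℤ) - ((σ p.1).val : ℤ) = d'} =>
        (⟨p.1.2, by
          obtain ⟨⟨p1, p2⟩, hc1, hc2⟩ := p
          simp only at hc1 hc2 ⊢
          have hv1 : p1.val < k := p1.isLt
          have hv2 : p2.val < k := p2.isLt
          have h1 : p1.val + e = p2.val := by omega
          have h2 : (⟨p2.val - e,
              Nat.lt_of_le_of_lt (Nat.sub_le _ _) p2.isLt⟩ : Fin k) = p1 :=
            Fin.val_injective (by show p2.val - e = p1.val; omega)
          rw [hPred]
          refine ⟨by omega, ?_⟩
          rw [h2]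
          omega⟩ : {j : Fin k // Pred σ j}))
    · rintro ⟨⟨p1, p2⟩, hc1, hc2⟩ ⟨⟨q1, q2⟩, hd1, hd2⟩ heq
      simp only [Subtype.mk.injEq] at heq
      apply Subtype.ext
      simp only at hc1 hd1 ⊢
      have h2 : p2 = q2 := heq
      have h1 : p1 = q1 := by
        apply Fin.val_injective
        have := congrArg Fin.val h2
        omega
      rw [h1, h2]
  -- pass to the finset of permutations
  have hcardeq : Nat.card {σ : Equiv.Perm (Fin k) // r ≤ pairCount σ d d'} =
      (Finset.univ.filter (fun σ : Equiv.Perm (Fin k) => r ≤ pairCount σ d d')).card := by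
    rw [Nat.card_eq_fintype_card, Fintype.card_subtype]
  rw [hcardeq]
  have hsub : (Finset.univ.filter (fun σ : Equiv.Perm (Fin k) => r ≤ pairCount σ d d')) ⊆
      ((Finset.univ : Finset (Fin k)).powersetCard r).biUnion
        (fun S => Finset.univ.filter (fun σ : Equiv.Perm (Fin k) => ∀ j ∈ S, Pred σ j)) := by
    intro σ hσ
    rw [Finset.mem_filter] at hσ
    have hr' : r ≤ (Finset.univ.filter (Pred σ)).card := le_trans hσ.2 (hle σ)
    obtain ⟨S, hSsub, hScard⟩ := Finset.exists_subset_card_eq hr'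
    rw [Finset.mem_biUnion]
    refine ⟨S, Finset.mem_powersetCard.mpr ⟨Finset.subset_univ _, hScard⟩, ?_⟩
    rw [Finset.mem_filter]
    exact ⟨Finset.mem_univ _, fun j hj => (Finset.mem_filter.mp (hSsub hj)).2⟩
  have hrk : r ≤ k := by omega
  calc (Finset.univ.filter (fun σ : Equiv.Perm (Fin k) => r ≤ pairCount σ d d')).card
      ≤ _ := Finset.card_le_card hsub
    _ ≤ ∑ S ∈ (Finset.univ : Finset (Fin k)).powersetCard r,
        (Finset.univ.filter (fun σ : Equiv.Perm (Fin k) => ∀ j ∈ S, Pred σ j)).card :=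
      Finset.card_biUnion_le
    _ ≤ ((Finset.univ : Finset (Fin k)).powersetCard r).card • (k - r).factorial := by
      apply Finset.sum_le_card_nsmul
      intro S hSmem
      have hScard : S.card = r := (Finset.mem_powersetCard.mp hSmem).2
      exact cardA_le k r hk hr2 e e' he S hScard
    _ = k.choose r * (k - r).factorial := by
      rw [smul_eq_mul, Finset.card_powersetCard, Finset.card_univ, Fintype.card_fin]
    _ = k.factorial / r.factorial := by
      symm
      apply Nat.div_eq_of_eq_mul_left (Nat.factorial_pos r)
      rw [← Nat.choose_mul_factorial_mul_factorial hrk]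
      ring

lemma pairCount_swap {k : ℕ} (σ : Equiv.Perm (Fin k)) (d d' : ℤ) :
    pairCount σ d d' = pairCount σ (-d) (-d') := by
  rw [pairCount, pairCount]
  apply Nat.card_congr
  refine ⟨fun p => ⟨(p.1.2, p.1.1), ?_⟩, fun p => ⟨(p.1.2, p.1.1), ?_⟩,
    fun p => rfl, fun p => rfl⟩
  · obtain ⟨⟨p1, p2⟩, hc1, hc2⟩ := p
    dsimp only at hc1 hc2 ⊢
    exact ⟨by omega, by omega⟩
  · obtain ⟨⟨p1, p2⟩, hc1, hc2⟩ := p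
    dsimp only at hc1 hc2 ⊢
    exact ⟨by omega, by omega⟩

lemma pairCount_rev {k : ℕ} (σ : Equiv.Perm (Fin k)) (d d' : ℤ) :
    pairCount (Fin.revPerm * σ) d d' = pairCount σ d (-d') := by
  rw [pairCount, pairCount]
  apply Nat.card_congr
  apply Equiv.subtypeEquivRight
  rintro ⟨p1, p2⟩
  simp only [Equiv.Perm.mul_apply, Fin.revPerm_apply, Fin.val_rev]
  have h1 : (σ p1).val < k := (σ p1).isLt
  have h2 : (σ p2).val < k := (σ p2).isLt
  constructor <;> rintro ⟨hc1, hc2⟩ <;> exact ⟨hc1, by omega⟩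

/-- The number of `k`-permutation matrices in which `(d,d')` occurs as the distance vector
of at least `r` pairs of 1-entries is at most `k!/r!`. -/
theorem stmt0 (k : ℕ) (hk : 1 ≤ k) (r : ℕ) (hr1 : 1 ≤ r) (hr2 : r ≤ k - 1)
    (d d' : ℤ) (hd : |d| ≤ (k : ℤ) - 1) (hd' : |d'| ≤ (k : ℤ) - 1)
    (hne : ¬ (d = 0 ∧ d' = 0)) :
    Nat.card {σ : Equiv.Perm (Fin k) // r ≤ pairCount σ d d'} ≤
      k.factorial / r.factorial := by
  classical
  by_cases hd0 : d = 0
  · have hd'0 : d' ≠ 0 := fun h => hne ⟨hd0, h⟩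
    have : IsEmpty {σ : Equiv.Perm (Fin k) // r ≤ pairCount σ d d'} := by
      constructor
      rintro ⟨σ, hσ⟩
      have hpc : pairCount σ d d' = 0 := by
        rw [pairCount]
        have : IsEmpty {p : Fin k × Fin k //
            ((p.2).val : ℤ) - ((p.1).val : ℤ) = d ∧
            ((σ p.2).val : ℤ) - ((σ p.1).val : ℤ) = d'} := by
          constructor
          rintro ⟨⟨p1, p2⟩, hc1, hc2⟩
          dsimp only at hc1 hc2
          have : p1 = p2 := Fin.val_injective (by omega)
          subst this
          exact hd'0 (by omega)
        exact Nat.card_of_isEmpty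
      rw [hpc] at hσ
      omega
    rw [Nat.card_of_isEmpty]
    exact Nat.zero_le _
  by_cases hd'0 : d' = 0
  · have : IsEmpty {σ : Equiv.Perm (Fin k) // r ≤ pairCount σ d d'} := by
      constructor
      rintro ⟨σ, hσ⟩
      have hpc : pairCount σ d d' = 0 := by
        rw [pairCount]
        have : IsEmpty {p : Fin k × Fin k //
            ((p.2).val : ℤ) - ((p.1).val : ℤ) = d ∧
            ((σ p.2).val : ℤ) - ((σ p.1).val : ℤ) = d'} := by
          constructor
          rintro ⟨⟨p1, p2⟩, hc1, hc2⟩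
          dsimp only at hc1 hc2
          have : σ p1 = σ p2 := Fin.val_injective (by omega)
          have : p1 = p2 := σ.injective this
          subst this
          exact hd0 (by omega)
        exact Nat.card_of_isEmpty
      rw [hpc] at hσ
      omega
    rw [Nat.card_of_isEmpty]
    exact Nat.zero_le _
  -- sign reductions
  have hswap : ∀ (a b : ℤ),
      Nat.card {σ : Equiv.Perm (Fin k) // r ≤ pairCount σ a b}
        = Nat.card {σ : Equiv.Perm (Fin k) // r ≤ pairCount σ (-a) (-b)} :=
    fun a b => Nat.card_congr (Equiv.subtypeEquivRight
      (fun σ => by rw [pairCount_swap σ a b]))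
  have hrev : ∀ (a b : ℤ),
      Nat.card {σ : Equiv.Perm (Fin k) // r ≤ pairCount σ a b}
        = Nat.card {σ : Equiv.Perm (Fin k) // r ≤ pairCount σ a (-b)} := by
    intro a b
    apply Nat.card_congr
    refine Equiv.subtypeEquiv (Equiv.mulLeft (Fin.revPerm : Equiv.Perm (Fin k))) ?_
    intro σ
    have := pairCount_rev ((Equiv.mulLeft (Fin.revPerm : Equiv.Perm (Fin k))) σ) a b
    have h2 : pairCount ((Equiv.mulLeft (Fin.revPerm : Equiv.Perm (Fin k))) σ) a (-b)
        = pairCount σ a b := by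
      have h3 := pairCount_rev σ a (-b)
      simpa using h3
    rw [h2]
  -- now handle signs
  rcases lt_trichotomy d 0 with hdneg | h0 | hdpos
  · rw [hswap d d']
    rcases lt_trichotomy d' 0 with h'neg | h'0 | h'pos
    · exact main_case k r hk hr2 (-d) (-d') (by omega) (by omega)
    · exact absurd h'0 hd'0
    · rw [hrev (-d) (-d')]
      rw [neg_neg]
      exact main_case k r hk hr2 (-d) d' (by omega) h'pos
  · exact absurd h0 hd0
  · rcases lt_trichotomy d' 0 with h'neg | h'0 | h'pos
    · rw [hrev d d']
      exact main_case k r hk hr2 d (-d') hdpos (by omega)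
    · exact absurd h'0 hd'0
    · exact main_case k r hk hr2 d d' hdpos h'pos
end
end

section
/- Let k be a positive integer and r ∈ [k]. The number of k×k permutation matrices that have an r-repetition (i.e., some nonzero vector (d,d') occurs as the distance vector of at least r pairs of 1-entries) is at most 2·k²·k!/r!. -/
open Asymptotics

noncomputable section

/-!
Up to swapping the two entries of each pair we may take `d' > 0`. A permutation with an
`r`-repetition `(d, d')` is then determined by `d`, `d'`, an `r`-set `T` of rows starting such
pairs, and the relative order of its 1-entries outside the rows `T + d`, which is one of `(k - r)!`
patterns: placing the 1-entries column by column from the left, the one in a row `i + d` with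
`i ∈ T` is forced by that of row `i`, and the others follow the pattern. This gives at most
`(2k - 1)(k - 1) · C(k, r) · (k - r)! ≤ 2k² · k!/r!` permutations.
-/

open Finset

section RelativeOrder

variable {α β : Type*} [LinearOrder β]

def rankIn (s : Finset α) (f : α → β) (x : α) : ℕ := #{z ∈ s | f z < f x}

lemma rankIn_lt_rankIn_iff {s : Finset α} {f : α → β} {x y : α} (hx : x ∈ s) :
    rankIn s f x < rankIn s f y ↔ f x < f y := by
  constructor
  · intro h
    by_contra! hyx
    exact h.not_ge (card_le_card fun z hz => by
      simp only [mem_filter] at hz ⊢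
      exact ⟨hz.1, hz.2.trans_le hyx⟩)
  · intro hxy
    refine card_lt_card ((ssubset_iff_of_subset fun z hz => ?_).2 ⟨x, ?_, ?_⟩)
    · simp only [mem_filter] at hz ⊢
      exact ⟨hz.1, hz.2.trans hxy⟩
    · simp [hx, hxy]
    · simp

lemma rankIn_lt_card {s : Finset α} {f : α → β} {x : α} (hx : x ∈ s) : rankIn s f x < #s :=
  card_lt_card (filter_ssubset.2 ⟨x, hx, lt_irrefl _⟩)

lemma rankIn_injOn {s : Finset α} {f : α → β} (hf : Function.Injective f) :
    Set.InjOn (rankIn s f) s := fun _ hx _ hy hxy =>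
  hf (le_antisymm (not_lt.1 fun h => hxy.not_gt ((rankIn_lt_rankIn_iff hy).2 h))
    (not_lt.1 fun h => hxy.not_lt ((rankIn_lt_rankIn_iff hx).2 h)))

lemma card_le_factorial_of_relOrder_determines {ι : Type*} (S : Finset ι) (f : ι → α ↪ β)
    (s : Finset α)
    (h : ∀ i ∈ S, ∀ j ∈ S, (∀ x ∈ s, ∀ y ∈ s, f i x < f i y ↔ f j x < f j y) → i = j) :
    #S ≤ (#s).factorial := by
  let pattern : ι → (s ↪ Fin #s) := fun i =>
    ⟨fun x => ⟨rankIn s (f i) x, rankIn_lt_card x.2⟩, fun x y hxy =>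
      Subtype.ext (rankIn_injOn (f i).injective x.2 y.2 (congrArg Fin.val hxy))⟩
  calc #S ≤ #(univ : Finset (s ↪ Fin #s)) := by
        refine card_le_card_of_injOn pattern (fun _ _ => mem_univ _) fun i hi j hj hij => ?_
        refine h i hi j hj fun x hx y hy => ?_
        have hrank (z : α) (hz : z ∈ s) : rankIn s (f i) z = rankIn s (f j) z :=
          congrArg Fin.val (DFunLike.congr_fun hij ⟨z, hz⟩)
        rw [← rankIn_lt_rankIn_iff (f := f i) hx, ← rankIn_lt_rankIn_iff (f := f j) hx, hrank x hx,
          hrank y hy]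
    _ = (#s).factorial := by simp [Fintype.card_embedding_eq, Nat.descFactorial_self]

end RelativeOrder

section PermutationMatrices

variable {k : ℕ}

def pairStarts (σ : Equiv.Perm (Fin k)) (d d' : ℤ) : Finset (Fin k) :=
  {i | ∃ j : Fin k, (j : ℤ) - i = d ∧ (σ j : ℤ) - σ i = d'}

def shiftRows (T : Finset (Fin k)) (d : ℤ) : Finset (Fin k) := {x | ∃ i ∈ T, (x : ℤ) - i = d}

lemma pairCount_eq_card_pairStarts (σ : Equiv.Perm (Fin k)) (d d' : ℤ) :
    pairCount σ d d' = #(pairStarts σ d d') := by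
  rw [pairCount, Nat.card_eq_fintype_card, Fintype.card_subtype]
  have : pairStarts σ d d' = ({p : Fin k × Fin k | ((p.2 : ℕ) : ℤ) - p.1 = d ∧
      ((σ p.2 : ℕ) : ℤ) - σ p.1 = d'} : Finset _).image Prod.fst := by
    ext i
    simp [pairStarts]
  rw [this, card_image_of_injOn]
  rintro ⟨i, j⟩ hp ⟨i', j'⟩ hq (rfl : i = i')
  simp only [coe_filter, mem_univ, true_and, Set.mem_ofPred_eq] at hp hq
  exact Prod.ext rfl (Fin.ext (show (j : ℕ) = j' by omega))

lemma pairCount_neg (σ : Equiv.Perm (Fin k)) (d d' : ℤ) :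
    pairCount σ (-d) (-d') = pairCount σ d d' :=
  Nat.card_congr <| (Equiv.prodComm _ _).subtypeEquiv fun p => by
    simp only [Equiv.prodComm_apply, Prod.fst_swap, Prod.snd_swap]
    omega

lemma sub_eq_of_mem_pairStarts {σ : Equiv.Perm (Fin k)} {d d' : ℤ} {i x : Fin k}
    (hi : i ∈ pairStarts σ d d') (hx : (x : ℤ) - i = d) : (σ x : ℤ) - σ i = d' := by
  obtain ⟨j, hj, hj'⟩ := (mem_filter.1 hi).2
  obtain rfl : j = x := Fin.ext (by omega)
  exact hj'

lemma card_le_card_shiftRows {σ : Equiv.Perm (Fin k)} {d d' : ℤ} {T : Finset (Fin k)}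
    (hT : T ⊆ pairStarts σ d d') : #T ≤ #(shiftRows T d) := by
  calc #T ≤ #((shiftRows T d).image fun x : Fin k => (x : ℤ)) := by
        refine card_le_card_of_injOn (fun i : Fin k => (i : ℤ) + d) (fun i hi => ?_)
          fun i _ i' _ h => Fin.ext (by simpa using h)
        obtain ⟨j, hj, -⟩ := (mem_filter.1 (hT hi)).2
        exact mem_image.2 ⟨j, mem_filter.2 ⟨mem_univ _, i, hi, hj⟩, by simp; omega⟩
    _ ≤ #(shiftRows T d) := card_image_le

lemma exists_subset_pairStarts (σ : Equiv.Perm (Fin k)) {r : ℕ} (hr : 1 ≤ r) {d d' : ℤ}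
    (hdd' : ¬(d = 0 ∧ d' = 0)) (h : r ≤ pairCount σ d d') :
    ∃ e ∈ Ioo (-(k : ℤ)) k, ∃ e' ∈ Ioo (0 : ℤ) k,
      ∃ T ∈ powersetCard r (univ : Finset (Fin k)), T ⊆ pairStarts σ e e' := by
  wlog hd' : 0 < d' generalizing d d'
  · have hne : d' ≠ 0 := by
      rintro rfl
      rw [pairCount_eq_card_pairStarts] at h
      obtain ⟨i, hi⟩ := card_pos.1 (by omega : 0 < #(pairStarts σ d 0))
      obtain ⟨j, hj, hj'⟩ := (mem_filter.1 hi).2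
      obtain rfl : j = i := σ.injective (Fin.ext (by omega))
      omega
    exact this (d := -d) (d' := -d') (by omega) (by rwa [pairCount_neg]) (by omega)
  rw [pairCount_eq_card_pairStarts] at h
  obtain ⟨i, hi⟩ := card_pos.1 (by omega : 0 < #(pairStarts σ d d'))
  obtain ⟨j, hj, hj'⟩ := (mem_filter.1 hi).2
  obtain ⟨T, hT, hTr⟩ := exists_subset_card_eq h
  have := i.isLt; have := j.isLt; have := (σ i).isLt; have := (σ j).isLt
  exact ⟨d, mem_Ioo.2 (by omega), d', mem_Ioo.2 (by omega), T,
    mem_powersetCard.2 ⟨subset_univ _, hTr⟩, hT⟩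

variable {d d' : ℤ} {T : Finset (Fin k)} {σ₁ σ₂ : Equiv.Perm (Fin k)}

/-- As `d' > 0`, the 1-entry of a row `i + d`, `i ∈ T`, lies in a column to the right of that of
row `i`, so it is forced once the columns to its left are placed. -/
lemma apply_eq_of_mem_shiftRows (hd' : 0 < d') (h₁ : T ⊆ pairStarts σ₁ d d')
    (h₂ : T ⊆ pairStarts σ₂ d d') {v : Fin k} (ih : ∀ w < v, σ₁.symm w = σ₂.symm w) {x : Fin k}
    (hx : σ₁ x = v) (hxT : x ∈ shiftRows T d) : σ₂ x = v := by
  obtain ⟨i, hi, hxi⟩ := (mem_filter.1 hxT).2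
  have e₁ := sub_eq_of_mem_pairStarts (h₁ hi) hxi
  have e₂ := sub_eq_of_mem_pairStarts (h₂ hi) hxi
  have hlt : σ₁ i < v := by rw [← hx, Fin.lt_def]; omega
  have hi₂ : σ₂ i = σ₁ i := by rw [← σ₂.apply_symm_apply (σ₁ i), ← ih _ hlt, σ₁.symm_apply_apply]
  rw [← hx]
  exact Fin.ext (by rw [hi₂] at e₂; omega)

lemma symm_apply_eq_of_forall_lt (hd' : 0 < d') (h₁ : T ⊆ pairStarts σ₁ d d')
    (h₂ : T ⊆ pairStarts σ₂ d d')
    (hR : ∀ x ∈ (shiftRows T d)ᶜ, ∀ y ∈ (shiftRows T d)ᶜ, σ₁ x < σ₁ y ↔ σ₂ x < σ₂ y)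
    (v : Fin k) (ih : ∀ w < v, σ₁.symm w = σ₂.symm w) : σ₁.symm v = σ₂.symm v := by
  set x := σ₁.symm v
  set y := σ₂.symm v
  have hx₁ : σ₁ x = v := σ₁.apply_symm_apply v
  have hy₂ : σ₂ y = v := σ₂.apply_symm_apply v
  by_contra hxy
  have hxR : x ∈ (shiftRows T d)ᶜ := mem_compl.2 fun hxT =>
    hxy (σ₂.injective ((apply_eq_of_mem_shiftRows hd' h₁ h₂ ih hx₁ hxT).trans hy₂.symm))
  have hyR : y ∈ (shiftRows T d)ᶜ := mem_compl.2 fun hyT =>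
    hxy (σ₁.injective (hx₁.trans (apply_eq_of_mem_shiftRows hd' h₂ h₁
      (fun w hw => (ih w hw).symm) hy₂ hyT).symm))
  rcases lt_trichotomy (σ₁ y) v with hlt | heq | hgt
  · have : σ₂ y = σ₁ y := by
      rw [← σ₂.apply_symm_apply (σ₁ y), ← ih _ hlt, σ₁.symm_apply_apply]
    exact hlt.ne (this ▸ hy₂)
  · exact hxy (σ₁.injective (hx₁.trans heq.symm))
  · have hlt : σ₂ x < v := hy₂ ▸ (hR x hxR y hyR).1 (hx₁ ▸ hgt)
    have : σ₁ x = σ₂ x := by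
      rw [← σ₁.apply_symm_apply (σ₂ x), ih _ hlt, σ₂.symm_apply_apply]
    exact hlt.ne (this ▸ hx₁)

lemma eq_of_relOrder_eq_on_compl_shiftRows (hd' : 0 < d') (h₁ : T ⊆ pairStarts σ₁ d d')
    (h₂ : T ⊆ pairStarts σ₂ d d')
    (hR : ∀ x ∈ (shiftRows T d)ᶜ, ∀ y ∈ (shiftRows T d)ᶜ, σ₁ x < σ₁ y ↔ σ₂ x < σ₂ y) :
    σ₁ = σ₂ := by
  have hsymm : σ₁.symm = σ₂.symm := Equiv.ext fun v =>
    WellFoundedLT.induction v (symm_apply_eq_of_forall_lt hd' h₁ h₂ hR)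
  simpa using congrArg Equiv.symm hsymm

lemma card_subset_pairStarts_le (hd' : 0 < d') (T : Finset (Fin k)) :
    #{σ : Equiv.Perm (Fin k) | T ⊆ pairStarts σ d d'} ≤ (k - #T).factorial := by
  obtain hS | ⟨σ₀, hσ₀⟩ := eq_empty_or_nonempty {σ : Equiv.Perm (Fin k) | T ⊆ pairStarts σ d d'}
  · simp [hS]
  have hcard : #(shiftRows T d)ᶜ ≤ k - #T := by
    rw [card_compl, Fintype.card_fin]
    have := card_le_card_shiftRows (mem_filter.1 hσ₀).2
    omega
  refine (card_le_factorial_of_relOrder_determines _ (fun σ => σ.toEmbedding) _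
    fun σ₁ h₁ σ₂ h₂ hR => ?_).trans (Nat.factorial_le hcard)
  exact eq_of_relOrder_eq_on_compl_shiftRows hd' (mem_filter.1 h₁).2 (mem_filter.1 h₂).2 hR

end PermutationMatrices

lemma factorial_div_factorial_eq_choose_mul {k r : ℕ} (hr : r ≤ k) :
    k.factorial / r.factorial = k.choose r * (k - r).factorial := by
  refine Nat.div_eq_of_eq_mul_left r.factorial_pos ?_
  rw [← Nat.choose_mul_factorial_mul_factorial hr]
  ring

theorem stmt1_general (k : ℕ) (r : ℕ) (hr1 : 1 ≤ r) (hr2 : r ≤ k) :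
    Nat.card {σ : Equiv.Perm (Fin k) //
        ∃ d d' : ℤ, ¬ (d = 0 ∧ d' = 0) ∧ r ≤ pairCount σ d d'} ≤
      2 * k ^ 2 * (k.factorial / r.factorial) := by
  classical
  set G := Ioo (-(k : ℤ)) k ×ˢ Ioo (0 : ℤ) k ×ˢ powersetCard r (univ : Finset (Fin k))
  have hcover : ({σ | ∃ d d' : ℤ, ¬ (d = 0 ∧ d' = 0) ∧ r ≤ pairCount σ d d'} :
      Finset (Equiv.Perm (Fin k))) ⊆
      G.biUnion fun g => {σ | g.2.2 ⊆ pairStarts σ g.1 g.2.1} := by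
    intro σ hσ
    obtain ⟨d, d', hdd', h⟩ := (mem_filter.1 hσ).2
    obtain ⟨e, he, e', he', T, hT, hTs⟩ := exists_subset_pairStarts σ hr1 hdd' h
    exact mem_biUnion.2 ⟨(e, e', T), mem_product.2 ⟨he, mem_product.2 ⟨he', hT⟩⟩,
      mem_filter.2 ⟨mem_univ _, hTs⟩⟩
  calc _ = #{σ : Equiv.Perm (Fin k) | ∃ d d' : ℤ, ¬ (d = 0 ∧ d' = 0) ∧ r ≤ pairCount σ d d'} := by
        rw [Nat.card_eq_fintype_card, Fintype.card_subtype]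
    _ ≤ ∑ g ∈ G, #{σ : Equiv.Perm (Fin k) | g.2.2 ⊆ pairStarts σ g.1 g.2.1} :=
        (card_le_card hcover).trans card_biUnion_le
    _ ≤ ∑ _g ∈ G, (k - r).factorial := sum_le_sum fun g hg => by
        obtain ⟨-, hg', hT⟩ := mem_product.1 hg |>.imp id mem_product.1
        rw [← (mem_powersetCard.1 hT).2]
        exact card_subset_pairStarts_le (mem_Ioo.1 hg').1 g.2.2
    _ = (2 * k - 1) * (k - 1) * (k.choose r * (k - r).factorial) := by
        simp only [G, sum_const, card_product, Int.card_Ioo, card_powersetCard, card_univ,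
          Fintype.card_fin, smul_eq_mul]
        rw [show (k - -k - 1 : ℤ).toNat = 2 * k - 1 by omega,
          show (k - 0 - 1 : ℤ).toNat = k - 1 by omega]
        ring
    _ ≤ 2 * k ^ 2 * (k.factorial / r.factorial) := by
        rw [factorial_div_factorial_eq_choose_mul hr2]
        exact Nat.mul_le_mul_right _
          ((Nat.mul_le_mul (Nat.sub_le _ _) (Nat.sub_le _ _)).trans_eq (by ring))

/-- The number of `k`-permutation matrices having an `r`-repetition is at most `2·k²·k!/r!`. -/
theorem stmt1 (k : ℕ) (hk : 1 ≤ k) (r : ℕ) (hr1 : 1 ≤ r) (hr2 : r ≤ k) :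
    Nat.card {σ : Equiv.Perm (Fin k) //
        ∃ d d' : ℤ, ¬ (d = 0 ∧ d' = 0) ∧ r ≤ pairCount σ d d'} ≤
      2 * k ^ 2 * (k.factorial / r.factorial) :=
  stmt1_general k r hr1 hr2
end
end

section
/- As k → ∞, the proportion of k-permutation matrices that are not scattered tends to 0; that is, the number of k-permutation matrices having an ⌈4·log₂ k / log₂ log₂ k⌉-repetition is o(k!). -/
open Asymptotics

noncomputable section

/-!
Fix a vector `(d, d')` with `d ≠ 0` and a set `S` of `r` position pairs `(x, x + d)`. These
pairs form chains, and a permutation sending every pair of `S` to vector `d'` is determined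
along each chain by its value at the chain start; if `c` is the number of chain starts, the
remaining `k - r - c` positions are filled by a permutation of what is left. So at most
`k ^ c (k - r - c)! ≤ 2 ^ r (k - r)!` permutations realise `S` (when `4 r ≤ k`), and summing
over the `choose k r` sets `S` and the `(2k + 1)²` vectors bounds the number of permutations
with an `r`-repetition by `(2k + 1)² 2 ^ r k! / r!`. For `r = ⌈4 log₂ k / log₂ log₂ k⌉` the
bound `r ^ r ≤ r! e ^ r` gives `r! ≥ (2k + 1)² 2 ^ r k` for large `k`, so the count is at most
`k! / k`.
-/

open Filter Finset Equiv Real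

lemma card_le_factorial_of_eqOn {α : Type*} [Fintype α] [DecidableEq α] (V : Finset α)
    (s : Finset (Perm α)) (h : ∀ σ ∈ s, ∀ τ ∈ s, ∀ x ∈ V, σ x = τ x) :
    #s ≤ (Fintype.card α - #V).factorial := by
  obtain rfl | ⟨σ₀, hσ₀⟩ := s.eq_empty_or_nonempty
  · simp
  calc #s ≤ #{f : Perm α | ∀ x ∈ V, f x = x} := by
        refine card_le_card_of_injOn (σ₀⁻¹ * ·) (fun τ hτ => ?_) (mul_right_injective _).injOn
        simp only [coe_filter, mem_univ, true_and, Set.mem_ofPred_eq, Perm.coe_mul,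
          Function.comp_apply]
        intro x hx
        rw [← h σ₀ hσ₀ τ hτ x hx]
        exact σ₀.symm_apply_apply x
    _ = Fintype.card {f : Perm α // ∀ x, ¬ x ∉ V → f x = x} := by
        rw [← Fintype.card_subtype]; simp
    _ = (Fintype.card α - #V).factorial := by
        rw [← Fintype.card_congr (Perm.subtypeEquivSubtypePerm _), Fintype.card_perm,
          Fintype.card_subtype_compl, Fintype.card_coe]

section Pairs

variable {k : ℕ}

def shiftPairs (k : ℕ) (d : ℤ) : Finset (Fin k × Fin k) :=
  {p | (p.2 : ℤ) - p.1 = d}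

def repPairs (σ : Perm (Fin k)) (d d' : ℤ) : Finset (Fin k × Fin k) :=
  {p | (p.2 : ℤ) - p.1 = d ∧ ((σ p.2 : ℕ) : ℤ) - (σ p.1 : ℕ) = d'}

lemma pairCount_eq_card_repPairs (σ : Perm (Fin k)) (d d' : ℤ) :
    pairCount σ d d' = #(repPairs σ d d') := by
  rw [pairCount, Nat.card_eq_fintype_card, Fintype.card_subtype]
  rfl

lemma repPairs_subset_shiftPairs (σ : Perm (Fin k)) (d d' : ℤ) :
    repPairs σ d d' ⊆ shiftPairs k d := fun _ hp =>
  mem_filter.mpr ⟨mem_univ _, (mem_filter.mp hp).2.1⟩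

lemma injOn_fst_shiftPairs (d : ℤ) :
    Set.InjOn Prod.fst (shiftPairs k d : Set (Fin k × Fin k)) := by
  intro p hp q hq h
  simp only [shiftPairs, coe_filter, mem_univ, true_and, Set.mem_ofPred_eq] at hp hq
  have h' := congrArg Fin.val h
  exact Prod.ext h (Fin.ext (by omega))

lemma injOn_snd_shiftPairs (d : ℤ) :
    Set.InjOn Prod.snd (shiftPairs k d : Set (Fin k × Fin k)) := by
  intro p hp q hq h
  simp only [shiftPairs, coe_filter, mem_univ, true_and, Set.mem_ofPred_eq] at hp hq
  have h' := congrArg Fin.val h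
  exact Prod.ext (Fin.ext (by omega)) h

lemma card_shiftPairs_le (d : ℤ) : #(shiftPairs k d) ≤ k := by
  simpa using card_le_card_of_injOn Prod.fst (fun _ _ => mem_coe.mpr (mem_univ _))
    (injOn_fst_shiftPairs d)

variable {d d' : ℤ} {S : Finset (Fin k × Fin k)}

lemma eqOn_image_snd_of_eqOn_sdiff (hd : d ≠ 0) {σ τ : Perm (Fin k)}
    (hσ : S ⊆ repPairs σ d d') (hτ : S ⊆ repPairs τ d d')
    (h : ∀ x ∈ S.image Prod.fst \ S.image Prod.snd, σ x = τ x) :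
    ∀ x ∈ S.image Prod.snd, σ x = τ x := by
  let before : Fin k → Fin k → Prop := fun x y => (x : ℤ) * d < (y : ℤ) * d
  have : IsTrans (Fin k) before := ⟨fun _ _ _ => lt_trans⟩
  have : Std.Irrefl before := ⟨fun _ => lt_irrefl _⟩
  intro x
  induction x using (Finite.wellFounded_of_trans_of_irrefl before).induction with
  | _ x ih =>
    intro hx
    obtain ⟨p, hp, rfl⟩ := mem_image.mp hx
    obtain ⟨hpd, hσp⟩ := (mem_filter.mp (hσ hp)).2
    obtain ⟨-, hτp⟩ := (mem_filter.mp (hτ hp)).2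
    have hp1 : σ p.1 = τ p.1 := by
      by_cases hB : p.1 ∈ S.image Prod.snd
      · refine ih p.1 ?_ hB
        have := mul_self_pos.mpr hd
        show (p.1 : ℤ) * d < (p.2 : ℤ) * d
        nlinarith
      · exact h _ (mem_sdiff.mpr ⟨mem_image_of_mem _ hp, hB⟩)
    have := congrArg Fin.val hp1
    exact Fin.ext (by omega)

lemma card_subset_repPairs_le (hd : d ≠ 0) :
    #{σ : Perm (Fin k) | S ⊆ repPairs σ d d'} ≤
      (k - #(S.image Prod.fst ∪ S.image Prod.snd)).factorial *
        k ^ #(S.image Prod.fst \ S.image Prod.snd) := by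
  set A := S.image Prod.fst
  set B := S.image Prod.snd
  set T : Finset (Perm (Fin k)) := {σ | S ⊆ repPairs σ d d'}
  have hfiber : ∀ g : ↥(A \ B) → Fin k,
      #{σ ∈ T | (fun x : ↥(A \ B) => σ x) = g} ≤ (k - #(A ∪ B)).factorial := by
    intro g
    simpa using card_le_factorial_of_eqOn (A ∪ B) _ fun σ hσ τ hτ x hx => by
      simp only [T, mem_filter, mem_univ, true_and] at hσ hτ
      have hAB : ∀ x ∈ A \ B, σ x = τ x := fun x hx =>
        (congrFun hσ.2 ⟨x, hx⟩).trans (congrFun hτ.2 ⟨x, hx⟩).symm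
      by_cases hxB : x ∈ B
      · exact eqOn_image_snd_of_eqOn_sdiff hd hσ.1 hτ.1 hAB x hxB
      · exact hAB x (mem_sdiff.mpr ⟨(mem_union.mp hx).resolve_right hxB, hxB⟩)
  have := card_le_mul_card_image_of_maps_to (t := univ) (fun _ _ => mem_univ _) _
    fun g _ => hfiber g
  rwa [card_univ, Fintype.card_fun, Fintype.card_coe, Fintype.card_fin] at this

lemma factorial_mul_pow_le {k r c : ℕ} (hc : c ≤ r) (hk : 4 * r ≤ k) :
    (k - (c + r)).factorial * k ^ c ≤ 2 ^ r * (k - r).factorial := by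
  have hdesc : k ^ c ≤ 2 ^ c * (k - r).descFactorial c :=
    calc k ^ c ≤ (2 * (k - r + 1 - c)) ^ c := Nat.pow_le_pow_left (by omega) c
      _ = 2 ^ c * (k - r + 1 - c) ^ c := mul_pow ..
      _ ≤ 2 ^ c * (k - r).descFactorial c :=
          Nat.mul_le_mul_left _ (Nat.pow_sub_le_descFactorial ..)
  calc (k - (c + r)).factorial * k ^ c
      ≤ (k - r - c).factorial * (2 ^ c * (k - r).descFactorial c) := by
        rw [show k - (c + r) = k - r - c by omega]; exact Nat.mul_le_mul_left _ hdesc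
    _ = 2 ^ c * (k - r).factorial := by
        rw [mul_left_comm, Nat.factorial_mul_descFactorial (by omega)]
    _ ≤ 2 ^ r * (k - r).factorial := Nat.mul_le_mul_right _ (Nat.pow_le_pow_right two_pos hc)

lemma card_subset_repPairs_le_of_card {r : ℕ} (hd : d ≠ 0) (hk : 4 * r ≤ k)
    (hS : S ⊆ shiftPairs k d) (hr : #S = r) :
    #{σ : Perm (Fin k) | S ⊆ repPairs σ d d'} ≤ 2 ^ r * (k - r).factorial := by
  have hA : #(S.image Prod.fst) = r :=
    hr ▸ card_image_of_injOn ((injOn_fst_shiftPairs d).mono (by simpa using hS))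
  have hB : #(S.image Prod.snd) = r :=
    hr ▸ card_image_of_injOn ((injOn_snd_shiftPairs d).mono (by simpa using hS))
  have hc : #(S.image Prod.fst \ S.image Prod.snd) ≤ r := hA ▸ card_le_card sdiff_subset
  refine (card_subset_repPairs_le hd).trans ?_
  rw [← card_sdiff_add_card, hB]
  exact factorial_mul_pow_le hc hk

lemma card_filter_le_pairCount_le {r : ℕ} (hd : d ≠ 0) (hk : 4 * r ≤ k) :
    #{σ : Perm (Fin k) | r ≤ pairCount σ d d'} ≤ k.choose r * (2 ^ r * (k - r).factorial) :=
  calc #{σ : Perm (Fin k) | r ≤ pairCount σ d d'}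
      ≤ #((powersetCard r (shiftPairs k d)).biUnion
          fun S => {σ : Perm (Fin k) | S ⊆ repPairs σ d d'}) := by
        refine card_le_card fun σ hσ => ?_
        rw [mem_filter, pairCount_eq_card_repPairs] at hσ
        obtain ⟨S, hS, hSr⟩ := exists_subset_card_eq hσ.2
        exact mem_biUnion.mpr ⟨S, mem_powersetCard.mpr
          ⟨hS.trans (repPairs_subset_shiftPairs σ d d'), hSr⟩, mem_filter.mpr ⟨mem_univ _, hS⟩⟩
    _ ≤ ∑ S ∈ powersetCard r (shiftPairs k d), #{σ : Perm (Fin k) | S ⊆ repPairs σ d d'} :=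
        card_biUnion_le
    _ ≤ ∑ _S ∈ powersetCard r (shiftPairs k d), 2 ^ r * (k - r).factorial :=
        sum_le_sum fun S hS =>
          card_subset_repPairs_le_of_card hd hk (mem_powersetCard.mp hS).1
            (mem_powersetCard.mp hS).2
    _ ≤ k.choose r * (2 ^ r * (k - r).factorial) := by
        rw [sum_const, card_powersetCard, smul_eq_mul]
        exact Nat.mul_le_mul_right _ (Nat.choose_le_choose r (card_shiftPairs_le d))

end Pairs

def HasRepetition {k : ℕ} (σ : Perm (Fin k)) (r : ℕ) : Prop :=
  ∃ d d' : ℤ, ¬ (d = 0 ∧ d' = 0) ∧ r ≤ pairCount σ d d'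

lemma card_hasRepetition_mul_factorial_le {k r : ℕ} (hr : 1 ≤ r) (hk : 4 * r ≤ k) :
    Nat.card {σ : Perm (Fin k) // HasRepetition σ r} * r.factorial ≤
      (2 * k + 1) ^ 2 * 2 ^ r * k.factorial := by
  classical
  set D : Finset (ℤ × ℤ) := (Icc (-k : ℤ) k ×ˢ Icc (-k : ℤ) k).filter (·.1 ≠ 0)
  have hD : #D ≤ (2 * k + 1) ^ 2 := by
    refine (card_filter_le _ _).trans_eq ?_
    rw [card_product, Int.card_Icc, show (k + 1 - -k : ℤ).toNat = 2 * k + 1 by omega, sq]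
  -- a pair with vector `(d, d')` forces `|d|, |d'| < k`, and `d = 0` forces `d' = 0`
  have hsub : ({σ | HasRepetition σ r} : Finset (Perm (Fin k))) ⊆
      D.biUnion fun p => {σ : Perm (Fin k) | r ≤ pairCount σ p.1 p.2} := by
    intro σ hσ
    obtain ⟨d, d', hne, hpc⟩ := (mem_filter.mp hσ).2
    obtain ⟨p, hp⟩ := card_pos.mp ((pairCount_eq_card_repPairs σ d d') ▸ (hr.trans hpc))
    obtain ⟨hpd, hpd'⟩ := (mem_filter.mp hp).2
    have := p.1.isLt; have := p.2.isLt; have := (σ p.1).isLt; have := (σ p.2).isLt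
    have hd : d ≠ 0 := by
      rintro rfl
      have hp12 : p.2 = p.1 := Fin.ext (by omega)
      exact hne ⟨rfl, by rw [hp12] at hpd'; omega⟩
    refine mem_biUnion.mpr ⟨(d, d'), ?_, mem_filter.mpr ⟨mem_univ _, hpc⟩⟩
    simp only [D, mem_filter, mem_product, mem_Icc]
    omega
  calc Nat.card {σ : Perm (Fin k) // HasRepetition σ r} * r.factorial
      = #{σ : Perm (Fin k) | HasRepetition σ r} * r.factorial := by
        rw [Nat.card_eq_fintype_card, Fintype.card_subtype]
    _ ≤ (∑ p ∈ D, #{σ : Perm (Fin k) | r ≤ pairCount σ p.1 p.2}) * r.factorial :=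
        Nat.mul_le_mul_right _ ((card_le_card hsub).trans card_biUnion_le)
    _ ≤ (#D * (k.choose r * (2 ^ r * (k - r).factorial))) * r.factorial := by
        refine Nat.mul_le_mul_right _ (sum_le_card_nsmul _ _ _ fun p hp => ?_)
        exact card_filter_le_pairCount_le (mem_filter.mp hp).2 hk
    _ ≤ ((2 * k + 1) ^ 2 * (k.choose r * (2 ^ r * (k - r).factorial))) * r.factorial := by
        gcongr
    _ = (2 * k + 1) ^ 2 * 2 ^ r * (k.choose r * r.factorial * (k - r).factorial) := by ring
    _ = (2 * k + 1) ^ 2 * 2 ^ r * k.factorial := by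
        rw [Nat.choose_mul_factorial_mul_factorial (by omega)]

lemma log_add_mul_le_mul_log {L u R : ℝ} (hu : 0 < u) (hlogu : log u + 1 ≤ u / 8)
    (hL : 2 * log 9 ≤ L) (hLu : u = log (L / log 2)) (hR : 4 * L / u ≤ R) :
    log 9 + 3 * L + R * (log 2 + 1) ≤ R * log R := by
  have hlog2 := log_two_gt_d9
  have hL0 : 0 < L := by linarith [log_pos (by norm_num : (1 : ℝ) < 9)]
  have hρ : 0 < 4 * L / u := by positivity
  have hlogL : log L = u + log (log 2) := by
    rw [hLu, log_div hL0.ne' (by positivity)]; ring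
  have hlog4 : log 4 = 2 * log 2 := by
    rw [show (4 : ℝ) = 2 ^ 2 by norm_num, log_pow]; push_cast; ring
  have h2log2 : 0 ≤ log 2 + log (log 2) := by
    rw [← log_mul (by norm_num) (by positivity)]
    exact log_nonneg (by linarith)
  have hlogR : 7 * u / 8 ≤ log R - (log 2 + 1) :=
    calc 7 * u / 8 ≤ log 4 + log L - log u - (log 2 + 1) := by linarith
      _ = log (4 * L / u) - (log 2 + 1) := by
        rw [log_div (by positivity) hu.ne', log_mul (by norm_num) hL0.ne']
      _ ≤ log R - (log 2 + 1) := by gcongr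
  calc log 9 + 3 * L + R * (log 2 + 1) ≤ 4 * L / u * (7 * u / 8) + R * (log 2 + 1) := by
        rw [show 4 * L / u * (7 * u / 8) = 7 * L / 2 by field_simp; ring]; linarith
    _ ≤ R * (7 * u / 8) + R * (log 2 + 1) := by gcongr
    _ ≤ R * log R := by nlinarith [hρ.trans_le hR]

lemma mul_two_pow_le_factorial {k r : ℕ} {u : ℝ} (hk : 81 ≤ k) (hu : 0 < u)
    (hlogu : log u + 1 ≤ u / 8) (hku : u = log (log k / log 2)) (hr : 4 * log k / u ≤ r) :
    (2 * k + 1) ^ 2 * 2 ^ r * k ≤ r.factorial := by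
  have hk' : (81 : ℝ) ≤ k := by exact_mod_cast hk
  have hL : 2 * log 9 ≤ log k := by
    have : log 81 = 2 * log 9 := by
      rw [show (81 : ℝ) = 9 ^ 2 by norm_num, log_pow]; norm_num
    linarith [log_le_log (by norm_num) hk']
  have key := log_add_mul_le_mul_log hu hlogu hL hku hr
  have hr0 : (0 : ℝ) < r :=
    lt_of_lt_of_le (by have := log_pos (by linarith : (1 : ℝ) < k); positivity) hr
  have hexp : (((2 * k + 1) ^ 2 * 2 ^ r * k : ℕ) : ℝ) * exp r ≤ r.factorial * exp r :=
    calc (((2 * k + 1) ^ 2 * 2 ^ r * k : ℕ) : ℝ) * exp r ≤ 9 * k ^ 3 * 2 ^ r * exp r := by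
          have h : ((2 * k + 1) ^ 2 * k : ℝ) ≤ 9 * k ^ 3 := by nlinarith
          push_cast
          linarith [mul_le_mul_of_nonneg_right h (by positivity : (0 : ℝ) ≤ 2 ^ r * exp r)]
      _ = exp (log (9 * k ^ 3 * 2 ^ r) + r) := by rw [exp_add, exp_log (by positivity)]
      _ ≤ exp (r * log r) := by
          refine exp_le_exp.mpr ?_
          rw [log_mul (by positivity) (by positivity), log_mul (by positivity) (by positivity),
            log_pow, log_pow]
          push_cast
          linarith
      _ = r ^ r := by rw [← log_pow, exp_log (by positivity)]
      _ ≤ r.factorial * exp r := by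
          have := pow_div_factorial_le_exp _ hr0.le r
          rwa [div_le_iff₀ (by positivity), mul_comm] at this
  exact_mod_cast le_of_mul_le_mul_right hexp (exp_pos _)

def scatterThreshold (k : ℕ) : ℕ :=
  ⌈4 * logb 2 k / logb 2 (logb 2 k)⌉₊

lemma scatterThreshold_eq (k : ℕ) :
    scatterThreshold k = ⌈4 * log k / log (log k / log 2)⌉₊ := by
  rw [scatterThreshold, ← log_div_log, ← log_div_log, mul_div_assoc',
    div_div_div_cancel_right₀ (log_pos one_lt_two).ne']

lemma eventually_log_add_one_le : ∀ᶠ u : ℝ in atTop, log u + 1 ≤ u / 8 := by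
  filter_upwards [isLittleO_log_id_atTop.bound (by norm_num : (0 : ℝ) < 1 / 16),
    eventually_ge_atTop 16] with u h hu
  rw [norm_eq_abs, norm_eq_abs, id, abs_of_nonneg (by linarith : (0 : ℝ) ≤ u)] at h
  linarith [le_abs_self (log u)]

lemma eventually_log_add_four_le : ∀ᶠ x : ℝ in atTop, log x + 4 ≤ x := by
  filter_upwards [isLittleO_log_id_atTop.bound (by norm_num : (0 : ℝ) < 1 / 2),
    eventually_ge_atTop 8] with x h hx
  rw [norm_eq_abs, norm_eq_abs, id, abs_of_nonneg (by linarith : (0 : ℝ) ≤ x)] at h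
  linarith [le_abs_self (log x)]

lemma eventually_scatterThreshold : ∀ᶠ k : ℕ in atTop,
    1 ≤ scatterThreshold k ∧ 4 * scatterThreshold k ≤ k ∧
      (2 * k + 1) ^ 2 * 2 ^ scatterThreshold k * k ≤ (scatterThreshold k).factorial := by
  have hcast := tendsto_natCast_atTop_atTop (R := ℝ)
  have hu : Tendsto (fun k : ℕ => log (log k / log 2)) atTop atTop :=
    tendsto_log_atTop.comp ((tendsto_log_atTop.comp hcast).atTop_div_const (log_pos one_lt_two))
  filter_upwards [eventually_ge_atTop 81, hu.eventually (eventually_ge_atTop 16),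
    hu.eventually eventually_log_add_one_le, hcast.eventually eventually_log_add_four_le]
    with k hk hu16 hlogu hlogk
  rw [scatterThreshold_eq]
  set u := log (log k / log 2)
  have hL : 0 < log (k : ℝ) := log_pos (by exact_mod_cast (by omega : 1 < k))
  have hρ : 0 < 4 * log k / u := by positivity
  refine ⟨Nat.one_le_ceil_iff.mpr hρ, ?_,
    mul_two_pow_le_factorial hk (by linarith) hlogu rfl (Nat.le_ceil _)⟩
  have hceil := Nat.ceil_lt_add_one hρ.le
  have hρL : 4 * log k / u ≤ log k / 4 := by
    rw [div_le_div_iff₀ (by linarith) (by norm_num)]; nlinarith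
  have : (4 * ⌈4 * log k / u⌉₊ : ℝ) < k := by linarith
  exact_mod_cast this.le

lemma isLittleO_of_eventually_mul_le {f g : ℕ → ℕ} (h : ∀ᶠ k in atTop, f k * k ≤ g k) :
    (fun k => (f k : ℝ)) =o[atTop] fun k => (g k : ℝ) := by
  have hinv : (fun k : ℕ => (k : ℝ)⁻¹ * g k) =o[atTop] fun k => (1 : ℝ) * g k :=
    ((isLittleO_one_iff ℝ).mpr tendsto_inv_atTop_nhds_zero_nat).mul_isBigO (isBigO_refl _ _)
  refine IsBigO.trans_isLittleO (IsBigO.of_bound 1 ?_) (by simpa using hinv)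
  filter_upwards [h, eventually_gt_atTop 0] with k hk hk0
  rw [norm_of_nonneg (by positivity), norm_of_nonneg (by positivity), one_mul,
    le_inv_mul_iff₀ (by positivity)]
  exact_mod_cast (mul_comm _ _).trans_le hk

/-- The number of `k`-permutation matrices having a
`⌈4·log₂ k / log₂ log₂ k⌉`-repetition is `o(k!)` as `k → ∞`. -/
theorem stmt2 :
    (fun k : ℕ => (Nat.card {σ : Equiv.Perm (Fin k) //
        ∃ d d' : ℤ, ¬ (d = 0 ∧ d' = 0) ∧
          ⌈4 * Real.logb 2 k / Real.logb 2 (Real.logb 2 k)⌉₊ ≤ pairCount σ d d'} : ℝ))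
      =o[Filter.atTop] (fun k : ℕ => (k.factorial : ℝ)) := by
  change (fun k : ℕ => (Nat.card {σ : Perm (Fin k) // HasRepetition σ (scatterThreshold k)} : ℝ))
    =o[atTop] _
  refine isLittleO_of_eventually_mul_le ?_
  filter_upwards [eventually_scatterThreshold] with k ⟨hr, hrk, hfac⟩
  refine Nat.le_of_mul_le_mul_right ?_ (Nat.factorial_pos (scatterThreshold k))
  calc _ = Nat.card {σ : Perm (Fin k) // HasRepetition σ (scatterThreshold k)} *
        (scatterThreshold k).factorial * k := by ring
    _ ≤ (2 * k + 1) ^ 2 * 2 ^ scatterThreshold k * k.factorial * k :=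
        Nat.mul_le_mul_right _ (card_hasRepetition_mul_factorial_le hr hrk)
    _ ≤ k.factorial * (scatterThreshold k).factorial := by
        rw [mul_right_comm, mul_comm]; exact Nat.mul_le_mul_left _ hfac
end
end

section
/- Let P be a permutation matrix, let u ∈ ℕ and q ∈ (1/u, 1). Suppose that for every positive integer z ≥ u and h = u, the following holds: f_P(z, qz) < h and f_{P^T}(z, qz) < h, where f_P(z,y) is the maximum number of rows of a binary P-avoiding matrix with z columns and at least y 1-entries in every row. Then for every i ≥ 1, f_P(u², q_i·u²) < h^i, where q_i = max(1/u, q^i). -/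
open Asymptotics

noncomputable section

/-- `f_P(z,y)`: the maximum number of rows of a binary `P`-avoiding matrix with `z` columns
and at least `y` 1-entries in every row. -/
def fP {k : ℕ} (σ : Equiv.Perm (Fin k)) (z : ℕ) (y : ℝ) : ℕ :=
  sSup {h : ℕ | ∃ A : Fin h → Fin z → Bool, ¬ containsP σ A ∧
    ∀ i : Fin h, y ≤ (Nat.card {j : Fin z // A i j = true} : ℝ)}

lemma contains_of_subMat {k n m n' m' : ℕ} (σ : Equiv.Perm (Fin k))
    {f : Fin n' → Fin n} {g : Fin m' → Fin m} (hf : StrictMono f) (hg : StrictMono g)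
    {A : Fin n → Fin m → Bool}
    (h : containsP σ (fun i j => A (f i) (g j))) : containsP σ A := by
  obtain ⟨f₀, g₀, hf₀, hg₀, hh⟩ := h
  exact ⟨f ∘ f₀, g ∘ g₀, hf.comp hf₀, hg.comp hg₀, fun i j hb => hh i j hb⟩

def padMat {n z Z : ℕ} (_hz : z ≤ Z) (B : Fin n → Fin z → Bool) : Fin n → Fin Z → Bool :=
  fun r c => if h : (c : ℕ) < z then B r ⟨c, h⟩ else false

lemma contains_of_padMat {k n z Z : ℕ} (σ : Equiv.Perm (Fin k)) (hz : z ≤ Z)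
    {B : Fin n → Fin z → Bool} (h : containsP σ (padMat hz B)) : containsP σ B := by
  obtain ⟨f₀, g₀, hf₀, hg₀, hh⟩ := h
  have hlt : ∀ j : Fin k, (g₀ j : ℕ) < z := by
    intro j
    have h1 : padMat hz B (f₀ (σ.symm j)) (g₀ j) = true := by
      apply hh
      simp [permMat]
    by_contra hc
    simp [padMat, hc] at h1
  refine ⟨f₀, fun j => ⟨g₀ j, hlt j⟩, hf₀, ?_, ?_⟩
  · intro a b hab
    have h3 := hg₀ hab
    rw [Fin.lt_def] at h3 ⊢
    exact h3
  · intro i j hb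
    have h2 := hh i j hb
    simpa [padMat, hlt j] using h2

lemma padMat_ones {n z Z : ℕ} (hz : z ≤ Z) (B : Fin n → Fin z → Bool) (r : Fin n) :
    Nat.card {c : Fin z // B r c = true} ≤ Nat.card {c : Fin Z // padMat hz B r c = true} := by
  apply Nat.card_le_card_of_injective
    (fun p => ⟨Fin.castLE hz p.1, by
      have hlt : ((Fin.castLE hz p.1 : Fin Z) : ℕ) < z := p.1.isLt
      simp [padMat, hlt, p.2]⟩)
  intro a b hab
  have h1 : (((Fin.castLE hz a.1 : Fin Z)) : ℕ) = ((Fin.castLE hz b.1 : Fin Z) : ℕ) :=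
    congrArg (fun x => ((x : {c : Fin Z // padMat hz B r c = true}).1 : ℕ)) hab
  simp at h1
  exact Subtype.ext (Fin.ext h1)


/-- The sparsifying lemma (with `h = u`): if `f_P(z,qz) < u` and `f_{Pᵀ}(z,qz) < u`
for all `z ≥ u`, then `f_P(u², q_i·u²) < u^i` for every `i ≥ 1`,
where `q_i = max(1/u, q^i)`. Note that the transpose of the permutation matrix of `σ`
is the permutation matrix of `σ⁻¹`. -/
theorem stmt4 {k : ℕ} (σ : Equiv.Perm (Fin k)) (u : ℕ) (hu : 1 ≤ u) (q : ℝ)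
    (hq1 : 1 / (u : ℝ) < q) (hq2 : q < 1)
    (h1 : ∀ z : ℕ, u ≤ z → fP σ z (q * z) < u)
    (h2 : ∀ z : ℕ, u ≤ z → fP σ⁻¹ z (q * z) < u) :
    ∀ i : ℕ, 1 ≤ i →
      fP σ (u ^ 2) (max (1 / (u : ℝ)) (q ^ i) * (u : ℝ) ^ 2) < u ^ i := by
  intro i hi
  have hu0 : (0:ℝ) < u := by
    have : (0:ℕ) < u := by omega
    exact_mod_cast this
  have hq0 : 0 < q := lt_trans (by positivity) hq1
  -- the fP defining sets
  let SS : ℕ → ℝ → Set ℕ := fun z y =>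
    {h : ℕ | ∃ A : Fin h → Fin z → Bool, ¬ containsP σ A ∧
      ∀ r : Fin h, y ≤ (Nat.card {c : Fin z // A r c = true} : ℝ)}
  have hfP : ∀ (z : ℕ) (y : ℝ), fP σ z y = sSup (SS z y) := fun _ _ => rfl
  have hSSmono : ∀ (z : ℕ) (y y' : ℝ), y' ≤ y → SS z y ⊆ SS z y' := by
    rintro z y y' hy n ⟨A, hA, hr⟩
    exact ⟨A, hA, fun r => le_trans hy (hr r)⟩
  -- the thresholds
  let Q : ℕ → ℝ := fun j => max (1/(u:ℝ)) (q^j)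
  have hQanti : ∀ a b : ℕ, a ≤ b → Q b ≤ Q a := fun a b hab =>
    max_le_max le_rfl (pow_le_pow_of_le_one hq0.le hq2.le hab)
  have hQfloor : ∀ j, 1/(u:ℝ) ≤ Q j := fun j => le_max_left _ _
  have hQstep : ∀ j : ℕ, q * Q j ≤ Q (j+1) := by
    intro j
    have hmm : q * Q j = max (q * (1/(u:ℝ))) (q * q^j) := mul_max_of_nonneg _ _ hq0.le
    rw [hmm]
    apply max_le_max
    · exact mul_le_of_le_one_left (by positivity) hq2.le
    · exact le_of_eq (by ring)
  have hUQ : ∀ j : ℕ, (u:ℝ) ≤ Q j * (u:ℝ)^2 := by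
    intro j
    have h4 : (1/(u:ℝ)) * (u:ℝ)^2 ≤ Q j * (u:ℝ)^2 :=
      mul_le_mul_of_nonneg_right (hQfloor j) (by positivity)
    have h5 : (1/(u:ℝ)) * (u:ℝ)^2 = (u:ℝ) := by field_simp
    linarith
  -- the key induction
  have key : ∀ J : ℕ, 1 ≤ J → J ≤ i → BddAbove (SS (u^2) (Q i * (u:ℝ)^2)) →
      ∀ n, n ∈ SS (u^2) (Q J * (u:ℝ)^2) → n < u ^ J := by
    intro J
    induction J using Nat.strong_induction_on with
    | _ J ih =>
      intro hJ1 hJi hBdd n hn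
      obtain rfl | hJ2 : J = 1 ∨ 2 ≤ J := by omega
      · -- base case J = 1
        have hsub : SS (u^2) (Q 1 * (u:ℝ)^2) ⊆ SS (u^2) (Q i * (u:ℝ)^2) :=
          hSSmono _ _ _ (mul_le_mul_of_nonneg_right (hQanti 1 i hi) (by positivity))
        have hb1 : BddAbove (SS (u^2) (Q 1 * (u:ℝ)^2)) := hBdd.mono hsub
        have hmem : n ≤ sSup (SS (u^2) (Q 1 * (u:ℝ)^2)) := le_csSup hb1 hn
        have heq : (q * ((u^2 : ℕ) : ℝ)) = Q 1 * (u:ℝ)^2 := by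
          have : Q 1 = q := by
            show max (1/(u:ℝ)) (q^1) = q
            rw [pow_one, max_eq_right hq1.le]
          rw [this]
          push_cast
          ring
        have hlt := h1 (u^2) (by nlinarith [sq_nonneg u] : u ≤ u^2)
        rw [hfP, heq] at hlt
        rw [pow_one]
        exact lt_of_le_of_lt hmem hlt
      · -- inductive step: J = j + 1 with 1 ≤ j
        obtain ⟨j, rfl⟩ : ∃ j, J = j + 1 := ⟨J - 1, by omega⟩
        have hj1 : 1 ≤ j := by omega
        have hji : j ≤ i := by omega
        by_contra hcon
        push_neg at hcon
        obtain ⟨A, hA, hrows⟩ := hn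
        -- restrict to the first u^(j+1) rows
        have hcastmono : StrictMono (Fin.castLE hcon : Fin (u^(j+1)) → Fin n) := by
          intro a b hab
          rw [Fin.lt_def] at hab ⊢
          exact hab
        let A₁ : Fin (u^(j+1)) → Fin (u^2) → Bool := fun r c => A (Fin.castLE hcon r) c
        have hA₁ : ¬ containsP σ A₁ := fun hc =>
          hA (contains_of_subMat σ (g := id) hcastmono strictMono_id hc)
        have hrows₁ : ∀ r, Q (j+1) * (u:ℝ)^2 ≤
            (Nat.card {c : Fin (u^2) // A₁ r c = true} : ℝ) := fun r => hrows (Fin.castLE hcon r)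
        -- block row indexing
        have hpow : u ^ j * u = u ^ (j+1) := (pow_succ u j).symm
        let rowIdx : Fin (u^j) → Fin u → Fin (u^(j+1)) := fun b r =>
          ⟨b.1 * u + r.1, by
            calc b.1 * u + r.1 < b.1 * u + u := by omega
            _ = (b.1 + 1) * u := by ring
            _ ≤ u^j * u := mul_le_mul_left b.2 u
            _ = u^(j+1) := hpow⟩
        have hrowIdx_mono : ∀ (a b : Fin (u^j)) (ra rb : Fin u), a < b →
            rowIdx a ra < rowIdx b rb := by
          intro a b ra rb hab
          rw [Fin.lt_def] at hab ⊢
          show a.1 * u + ra.1 < b.1 * u + rb.1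
          calc a.1 * u + ra.1 < a.1 * u + u := by omega
          _ = (a.1 + 1) * u := by ring
          _ ≤ b.1 * u := mul_le_mul_left hab u
          _ ≤ b.1 * u + rb.1 := Nat.le_add_right _ _
        -- block supports
        let Sup : Fin (u^j) → Finset (Fin (u^2)) := fun b =>
          Finset.univ.filter (fun c => ∃ r : Fin u, A₁ (rowIdx b r) c = true)
        by_cases hall : ∀ b : Fin (u^j), Q j * (u:ℝ)^2 ≤ ((Sup b).card : ℝ)
        · -- Case 1: all blocks have large support; contract
          let A' : Fin (u^j) → Fin (u^2) → Bool := fun b c => decide (c ∈ Sup b)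
          have hA'card : ∀ b, Nat.card {c : Fin (u^2) // A' b c = true} = (Sup b).card := by
            intro b
            have e1 : Nat.card {c : Fin (u^2) // A' b c = true}
                = Nat.card {c : Fin (u^2) // c ∈ Sup b} := by
              apply Nat.card_congr
              apply Equiv.subtypeEquivRight
              intro c
              show decide (c ∈ Sup b) = true ↔ c ∈ Sup b
              simp
            rw [e1, Nat.card_eq_fintype_card, Fintype.card_coe]
          have hA' : ¬ containsP σ A' := by
            intro hc
            obtain ⟨f₀, g₀, hf₀, hg₀, hh⟩ := hc
            have hex : ∀ ii : Fin k, ∃ r : Fin u, A₁ (rowIdx (f₀ ii) r) (g₀ (σ ii)) = true := by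
              intro ii
              have h3 : A' (f₀ ii) (g₀ (σ ii)) = true := hh ii (σ ii) (by simp [permMat])
              have h4 : g₀ (σ ii) ∈ Sup (f₀ ii) := of_decide_eq_true h3
              have h5 := Finset.mem_filter.mp h4
              exact h5.2
            apply hA₁
            refine ⟨fun ii => rowIdx (f₀ ii) (hex ii).choose, g₀, ?_, hg₀, ?_⟩
            · intro a b hab
              exact hrowIdx_mono _ _ _ _ (hf₀ hab)
            · intro ii jj hb
              have hσ : σ ii = jj := of_decide_eq_true hb
              rw [← hσ]
              exact (hex ii).choose_spec
          have hmem : u ^ j ∈ SS (u^2) (Q j * (u:ℝ)^2) := by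
            refine ⟨A', hA', ?_⟩
            intro b
            rw [hA'card b]
            exact hall b
          exact absurd (ih j (by omega) hj1 hji hBdd (u^j) hmem) (lt_irrefl _)
        · -- Case 2: some block has small support
          push_neg at hall
          obtain ⟨b, hsb⟩ := hall
          let M : Fin u → Fin (u^2) → Bool := fun r c => A₁ (rowIdx b r) c
          have hrowfix : StrictMono (fun r : Fin u => rowIdx b r) := by
            intro a a' haa
            rw [Fin.lt_def] at haa ⊢
            show b.1 * u + a.1 < b.1 * u + a'.1
            omega
          have hM : ¬ containsP σ M := fun hc =>
            hA₁ (contains_of_subMat σ (g := id) hrowfix strictMono_id hc)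
          have hMrows : ∀ r : Fin u, Q (j+1) * (u:ℝ)^2 ≤
              (Nat.card {c : Fin (u^2) // M r c = true} : ℝ) := fun r => hrows₁ (rowIdx b r)
          have hMS : ∀ (r : Fin u) (c : Fin (u^2)), M r c = true → c ∈ Sup b := by
            intro r c hc
            exact Finset.mem_filter.mpr ⟨Finset.mem_univ c, ⟨r, hc⟩⟩
          set m : ℕ := ⌈Q (j+1) * (u:ℝ)^2⌉₊ with hmdef
          have hmge : Q (j+1) * (u:ℝ)^2 ≤ (m:ℝ) := by rw [hmdef]; exact Nat.le_ceil _
          have hmu : u ≤ m := by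
            have h6 : (u:ℝ) ≤ (m:ℝ) := le_trans (hUQ (j+1)) hmge
            exact_mod_cast h6
          set z : ℕ := ⌊(m:ℝ)/q⌋₊ with hzdef
          have hzq : q * (z:ℝ) ≤ (m:ℝ) := by
            have h6 : (z:ℝ) ≤ (m:ℝ)/q := by rw [hzdef]; exact Nat.floor_le (by positivity)
            calc q * (z:ℝ) ≤ q * ((m:ℝ)/q) := mul_le_mul_of_nonneg_left h6 hq0.le
            _ = (m:ℝ) := by field_simp
          have hmz : m ≤ z := by
            rw [hzdef]
            apply Nat.le_floor
            rw [le_div_iff₀ hq0]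
            nlinarith [Nat.cast_nonneg (α := ℝ) m]
          have hzu : u ≤ z := le_trans hmu hmz
          have hz1 : ((m:ℝ) - 1) < q * (z:ℝ) := by
            have h7 : (m:ℝ)/q < (z:ℝ) + 1 := by rw [hzdef]; exact Nat.lt_floor_add_one _
            have h8 : (m:ℝ) < ((z:ℝ) + 1) * q := (div_lt_iff₀ hq0).mp h7
            nlinarith
          have hMrowsm : ∀ r : Fin u, m ≤ Nat.card {c : Fin (u^2) // M r c = true} := by
            intro r
            rw [hmdef]
            exact Nat.ceil_le.mpr (hMrows r)
          have hsz : (Sup b).card ≤ z := by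
            rw [hzdef]
            apply Nat.le_floor
            rw [le_div_iff₀ hq0]
            have h9 : q * (Q j * (u:ℝ)^2) ≤ (m:ℝ) := by
              have h9a := mul_le_mul_of_nonneg_right (hQstep j) (by positivity : (0:ℝ) ≤ (u:ℝ)^2)
              calc q * (Q j * (u:ℝ)^2) = (q * Q j) * (u:ℝ)^2 := by ring
              _ ≤ Q (j+1) * (u:ℝ)^2 := h9a
              _ ≤ (m:ℝ) := hmge
            nlinarith [hq0.le]
          by_cases hzu2 : u^2 ≤ z
          · -- sub-case: the block itself is dense enough at width u²
            have hqu2 : q * (u:ℝ)^2 ≤ (m:ℝ) := by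
              have hc2 : ((u:ℝ))^2 ≤ (z:ℝ) := by
                have hc3 : ((u^2:ℕ):ℝ) ≤ ((z:ℕ):ℝ) := by exact_mod_cast hzu2
                push_cast at hc3
                linarith
              calc q * (u:ℝ)^2 ≤ q * (z:ℝ) := mul_le_mul_of_nonneg_left hc2 hq0.le
              _ ≤ (m:ℝ) := hzq
            have hQ1 : Q 1 * (u:ℝ)^2 = q * (u:ℝ)^2 := by
              have hq1' : Q 1 = q := by
                show max (1/(u:ℝ)) (q^1) = q
                rw [pow_one, max_eq_right hq1.le]
              rw [hq1']
            have hmem1 : u ∈ SS (u^2) (Q 1 * (u:ℝ)^2) := by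
              refine ⟨M, hM, ?_⟩
              intro r
              have h10 : (m:ℝ) ≤ (Nat.card {c : Fin (u^2) // M r c = true} : ℝ) := by
                exact_mod_cast hMrowsm r
              rw [hQ1]
              linarith
            have h21 := ih 1 (by omega) le_rfl hi hBdd u hmem1
            rw [pow_one] at h21
            exact absurd h21 (lt_irrefl u)
          · -- sub-case: z < u²; restrict the block to its support and pad to z columns
            push_neg at hzu2
            have hzZ : z ≤ u^2 := le_of_lt hzu2
            have hsz' : (Sup b).card ≤ z := hsz
            let e := (Sup b).orderIsoOfFin rfl
            let Mres : Fin u → Fin ((Sup b).card) → Bool := fun r c => M r ((e c : {x // x ∈ Sup b}) : Fin (u^2))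
            have hemono : StrictMono (fun c : Fin ((Sup b).card) => ((e c : {x // x ∈ Sup b}) : Fin (u^2))) := by
              intro a a' haa
              exact Subtype.coe_lt_coe.mpr (e.strictMono haa)
            have hMres : ¬ containsP σ Mres := fun hc =>
              hM (contains_of_subMat σ (f := id) strictMono_id hemono hc)
            have hN : ¬ containsP σ (padMat hsz' Mres) := fun hc => hMres (contains_of_padMat σ hsz' hc)
            have hNrows : ∀ r : Fin u, q * (z:ℝ) ≤
                (Nat.card {c : Fin z // padMat hsz' Mres r c = true} : ℝ) := by
              intro r
              have hres : Nat.card {c : Fin (u^2) // M r c = true}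
                  ≤ Nat.card {c : Fin ((Sup b).card) // Mres r c = true} := by
                apply Nat.card_le_card_of_injective
                  (fun p => ⟨e.symm ⟨p.1, hMS r p.1 p.2⟩, by
                    show M r ((e (e.symm ⟨p.1, hMS r p.1 p.2⟩) : {x // x ∈ Sup b}) : Fin (u^2)) = true
                    rw [e.apply_symm_apply]
                    exact p.2⟩)
                intro p p' hpp
                have h11 : e.symm ⟨p.1, hMS r p.1 p.2⟩ = e.symm ⟨p'.1, hMS r p'.1 p'.2⟩ :=
                  congrArg (fun x => (x : {c : Fin ((Sup b).card) // Mres r c = true}).1) hpp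
                have h12 := e.symm.injective h11
                have h13 : p.1 = p'.1 := congrArg (fun x => ((x : {x // x ∈ Sup b}) : Fin (u^2))) h12
                exact Subtype.ext h13
              have hpad := padMat_ones hsz' Mres r
              have h14 : m ≤ Nat.card {c : Fin z // padMat hsz' Mres r c = true} :=
                le_trans (hMrowsm r) (le_trans hres hpad)
              have h15 : (m:ℝ) ≤ (Nat.card {c : Fin z // padMat hsz' Mres r c = true} : ℝ) := by
                exact_mod_cast h14
              linarith
            have hmemT : u ∈ SS z (q * (z:ℝ)) := ⟨padMat hsz' Mres, hN, hNrows⟩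
            rcases Classical.em (BddAbove (SS z (q * (z:ℝ)))) with hbb | hbb
            · have h16 : u ≤ sSup (SS z (q * (z:ℝ))) := le_csSup hbb hmemT
              have h17 := h1 z hzu
              rw [hfP] at h17
              omega
            · obtain ⟨Nb, hNbmem, hNbgt⟩ := (not_bddAbove_iff.mp hbb) (sSup (SS (u^2) (Q i * (u:ℝ)^2)))
              obtain ⟨B, hB, hBrows⟩ := hNbmem
              have hB' : ¬ containsP σ (padMat hzZ B) := fun hc => hB (contains_of_padMat σ hzZ hc)
              have hB'rows : ∀ r : Fin Nb, Q i * (u:ℝ)^2 ≤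
                  (Nat.card {c : Fin (u^2) // padMat hzZ B r c = true} : ℝ) := by
                intro r
                have h13 := hBrows r
                have h14 : m ≤ Nat.card {c : Fin z // B r c = true} := by
                  have h18 : ((m:ℝ) - 1) < (Nat.card {c : Fin z // B r c = true} : ℝ) :=
                    lt_of_lt_of_le hz1 h13
                  have h19 : (m:ℝ) < (Nat.card {c : Fin z // B r c = true} : ℝ) + 1 := by linarith
                  have h20 : m < Nat.card {c : Fin z // B r c = true} + 1 := by exact_mod_cast h19
                  omega
                have h15 := padMat_ones hzZ B r
                have h16 : (m:ℝ) ≤ (Nat.card {c : Fin (u^2) // padMat hzZ B r c = true} : ℝ) := by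
                  exact_mod_cast le_trans h14 h15
                have h17 : Q i * (u:ℝ)^2 ≤ Q (j+1) * (u:ℝ)^2 :=
                  mul_le_mul_of_nonneg_right (hQanti _ _ hJi) (by positivity)
                linarith
              have hmemS : Nb ∈ SS (u^2) (Q i * (u:ℝ)^2) := ⟨padMat hzZ B, hB', hB'rows⟩
              exact absurd (le_csSup hBdd hmemS) (not_le.mpr hNbgt)
  -- conclude from the key claim
  rcases Classical.em (BddAbove (SS (u^2) (Q i * (u:ℝ)^2))) with hBdd | hBdd
  · rcases Set.eq_empty_or_nonempty (SS (u^2) (Q i * (u:ℝ)^2)) with he | hne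
    · show sSup (SS (u^2) (Q i * (u:ℝ)^2)) < u^i
      rw [he, csSup_empty]
      exact pow_pos (by omega) i
    · have hmem := Nat.sSup_mem hne hBdd
      exact key i hi le_rfl hBdd _ hmem
  · show sSup (SS (u^2) (Q i * (u:ℝ)^2)) < u^i
    rw [csSup_of_not_bddAbove hBdd, csSup_empty]
    exact pow_pos (by omega) i
end
end

section
/- Let u ∈ ℕ, q ∈ (1/u, 1), and let P be a permutation matrix such that every u×z binary matrix (z ≥ u) with at least qz 1-entries in every row contains P, i.e., f_P(z, qz) < h for all z ≥ u with h = u. Then f_P(u², u) ≤ u^⌈−log u / log q⌉. -/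
open Asymptotics

noncomputable section

/-!
Induction on `t`: an avoiding matrix with `z ≤ u²` columns, at least `u` ones per row and
`q^(t+1) z ≤ u` has fewer than `u^(t+1)` rows. Cut `u^(t+2)` rows into `u` blocks of `u^(t+1)`
consecutive rows. If a block had column support of size below `q z`, deleting the other columns
would contradict the claim for `t`; so OR-ing each block into a single row
yields a `u`-row avoiding matrix with at least `q z` ones per row, which the hypothesis forbids.
The base case pads the columns up to `⌊u / q⌋` so that the hypothesis applies directly.
Taking `t + 1 = ⌈-log u / log q⌉` makes `q^(t+1) u² ≤ u`.
-/

theorem containsB.of_submatrix {a b n m n' m' : ℕ} {B : Fin a → Fin b → Bool}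
    {A : Fin n → Fin m → Bool} {A' : Fin n' → Fin m' → Bool} {F : Fin n' → Fin n}
    {G : Fin m' → Fin m} (hF : StrictMono F) (hG : StrictMono G)
    (hA : ∀ i j, A' i j = true → A (F i) (G j) = true) (h : containsB B A') :
    containsB B A := by
  obtain ⟨f, g, hf, hg, he⟩ := h
  exact ⟨F ∘ f, G ∘ g, hF.comp hf, hG.comp hg, fun i j hij => hA _ _ (he i j hij)⟩

section

variable {k : ℕ} {σ : Equiv.Perm (Fin k)}

theorem permMat_apply_self (σ : Equiv.Perm (Fin k)) (i : Fin k) : permMat σ i (σ i) = true :=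
  decide_eq_true rfl

theorem containsP.of_extendCols {n z Z : ℕ} {A : Fin n → Fin z → Bool}
    {A' : Fin n → Fin Z → Bool} {G : Fin z → Fin Z} (hG : StrictMono G)
    (hA' : ∀ i j, A' i j = true → ∃ j₀, G j₀ = j ∧ A i j₀ = true) (h : containsP σ A') :
    containsP σ A := by
  obtain ⟨f, g, hf, hg, he⟩ := h
  have hcol : ∀ c, ∃ j₀, G j₀ = g (σ c) ∧ A (f c) j₀ = true :=
    fun c => hA' _ _ (he c _ (permMat_apply_self σ c))
  choose g₀ hg₀ hA using hcol
  refine ⟨f, g₀ ∘ σ.symm, hf, fun a b hab => hG.lt_iff_lt.mp ?_, fun i j hij => ?_⟩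
  · simpa [hg₀] using hg hab
  · obtain rfl : σ i = j := of_decide_eq_true hij
    simpa using hA i

theorem containsP.of_mergeRows {n m z : ℕ} {A : Fin n → Fin z → Bool}
    {M : Fin m → Fin z → Bool} {β : Fin n → Fin m} (hβ : Monotone β)
    (hM : ∀ s j, M s j = true → ∃ i, β i = s ∧ A i j = true) (h : containsP σ M) :
    containsP σ A := by
  obtain ⟨f, g, hf, hg, he⟩ := h
  have hrow : ∀ r, ∃ i, β i = f r ∧ A i (g (σ r)) = true :=
    fun r => hM _ _ (he r _ (permMat_apply_self σ r))
  choose F hF hA using hrow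
  refine ⟨F, g, fun a b hab => hβ.reflect_lt ?_, hg, fun i j hij => ?_⟩
  · simpa [hF] using hf hab
  · obtain rfl : σ i = j := of_decide_eq_true hij
    exact hA i

variable (σ) in
def fPSet (z : ℕ) (y : ℝ) : Set ℕ :=
  {h : ℕ | ∃ A : Fin h → Fin z → Bool, ¬ containsP σ A ∧
    ∀ i : Fin h, y ≤ (Nat.card {j : Fin z // A i j = true} : ℝ)}

theorem fP_eq_sSup_fPSet (z : ℕ) (y : ℝ) : fP σ z y = sSup (fPSet σ z y) := rfl

theorem mem_fPSet_of_le {z n m : ℕ} {y : ℝ} (hmn : m ≤ n) (hn : n ∈ fPSet σ z y) :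
    m ∈ fPSet σ z y := by
  obtain ⟨A, hA, hrow⟩ := hn
  refine ⟨fun i => A (Fin.castLE hmn i), fun h => hA ?_, fun i => hrow _⟩
  exact containsB.of_submatrix (Fin.strictMono_castLE hmn) strictMono_id (fun _ _ h => h) h

theorem fPSet_subset {z Z : ℕ} {y y' : ℝ} (hz : z ≤ Z) (hy : y' ≤ ⌈y⌉₊) :
    fPSet σ z y ⊆ fPSet σ Z y' := by
  rintro n ⟨A, hA, hrow⟩
  let A' : Fin n → Fin Z → Bool := fun i j => decide (∃ j₀, Fin.castLE hz j₀ = j ∧ A i j₀ = true)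
  refine ⟨A', fun h => hA (h.of_extendCols (Fin.strictMono_castLE hz)
    fun i j hj => of_decide_eq_true hj), fun i => ?_⟩
  have hcount : Nat.card {j // A i j = true} ≤ Nat.card {j // A' i j = true} :=
    Nat.card_le_card_of_injective (fun j => ⟨Fin.castLE hz j.1, decide_eq_true ⟨j.1, rfl, j.2⟩⟩)
      fun a b hab => Subtype.ext (Fin.castLE_injective hz (congrArg Subtype.val hab))
  calc y' ≤ ⌈y⌉₊ := hy
    _ ≤ Nat.card {j // A i j = true} := by exact_mod_cast Nat.ceil_le.mpr (hrow i)
    _ ≤ _ := by exact_mod_cast hcount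

theorem lt_of_mem_fPSet {z Z n m : ℕ} {y y' : ℝ} (hB : BddAbove (fPSet σ Z y')) (hz : z ≤ Z)
    (hy : y' ≤ ⌈y⌉₊) (hlt : fP σ z y < m) (hn : n ∈ fPSet σ z y) : n < m :=
  (le_csSup (hB.mono (fPSet_subset hz hy)) hn).trans_lt hlt

theorem card_mem_fPSet_of_support_subset {n z : ℕ} {y : ℝ} {A : Fin n → Fin z → Bool}
    (hA : ¬ containsP σ A) (hrow : ∀ i, y ≤ Nat.card {j // A i j = true})
    (T : Finset (Fin z)) (hT : ∀ i j, A i j = true → j ∈ T) : n ∈ fPSet σ T.card y := by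
  let e := T.orderIsoOfFin rfl
  refine ⟨fun i j => A i (e j), fun h => hA ?_, fun i => (hrow i).trans_eq ?_⟩
  · exact containsB.of_submatrix strictMono_id (fun a b hab => e.strictMono hab)
      (fun _ _ h => h) h
  · exact congrArg _ (Nat.card_congr ((Equiv.subtypeSubtypeEquivSubtype (hT i _)).symm.trans
      (e.toEquiv.subtypeEquiv fun _ => Iff.rfl).symm))

theorem mem_fPSet_of_mul_mem_fPSet {m L z : ℕ} {y c : ℝ}
    (hsmall : ∀ z₁ : ℕ, (z₁ : ℝ) < c → L ∉ fPSet σ z₁ y) (h : m * L ∈ fPSet σ z y) :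
    m ∈ fPSet σ z c := by
  classical
  obtain ⟨A, hA, hrow⟩ := h
  let block (s : Fin m) (r : Fin L) : Fin (m * L) := finProdFinEquiv (s, r)
  have hblock (s : Fin m) : StrictMono (block s) := fun a b hab => by
    simp only [block, Fin.lt_def, finProdFinEquiv_apply_val] at hab ⊢
    omega
  have hdivNat (s : Fin m) (r : Fin L) : (block s r).divNat = s :=
    congrArg Prod.fst ((finProdFinEquiv_symm_apply (block s r)).symm.trans
      (finProdFinEquiv.symm_apply_apply (s, r)))
  let T (s : Fin m) : Finset (Fin z) := {j | ∃ r, A (block s r) j = true}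
  have hT (s : Fin m) : c ≤ (T s).card := by
    by_contra! hlt
    refine hsmall _ hlt (card_mem_fPSet_of_support_subset (A := fun r => A (block s r))
      (fun h => hA ?_) (fun r => hrow _) (T s) fun r j hj => ?_)
    · exact containsB.of_submatrix (hblock s) strictMono_id (fun _ _ h => h) h
    · simpa [T] using ⟨r, hj⟩
  refine ⟨fun s j => decide (j ∈ T s), fun h => hA (h.of_mergeRows (β := Fin.divNat) ?_ ?_),
    fun s => ?_⟩
  · exact fun a b hab => Fin.le_def.mpr (by simpa using Nat.div_le_div_right hab)
  · intro s j hj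
    obtain ⟨r, hr⟩ : ∃ r, A (block s r) j = true := by simpa [T] using hj
    exact ⟨block s r, hdivNat s r, hr⟩
  · refine (hT s).trans_eq ?_
    simp [Nat.card_eq_fintype_card, Fintype.card_subtype]

theorem lt_of_mem_fPSet_of_mul_le {u z n : ℕ} {q : ℝ} (hq1 : 1 / (u : ℝ) < q) (hq2 : q < 1)
    (H : ∀ z : ℕ, u ≤ z → z ≤ u ^ 2 → (u : ℝ) - 1 < q * z → ∀ n ∈ fPSet σ z (q * z), n < u)
    (hqz : q * z ≤ u) (hn : n ∈ fPSet σ z u) : n < u := by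
  have hq0 : 0 < q := lt_of_le_of_lt (by positivity) hq1
  set z' := ⌊(u : ℝ) / q⌋₊
  have hz'le : (z' : ℝ) ≤ u / q := Nat.floor_le (by positivity)
  have hz'gt : (u : ℝ) / q - 1 < z' := Nat.sub_one_lt_floor _
  have hqz'le : q * z' ≤ u := by rwa [le_div_iff₀' hq0] at hz'le
  have hqz'gt : (u : ℝ) - 1 < q * z' := by
    have := mul_lt_mul_of_pos_left hz'gt hq0
    rw [mul_sub, mul_div_cancel₀ _ hq0.ne'] at this
    linarith
  have huz' : u ≤ z' := Nat.le_floor ((le_div_iff₀ hq0).mpr (by nlinarith))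
  have hzz' : z ≤ z' := Nat.le_floor ((le_div_iff₀' hq0).mpr hqz)
  have hz'u : z' ≤ u ^ 2 := Nat.floor_le_of_le <| (div_le_iff₀ hq0).mpr <| by
    rcases u.eq_zero_or_pos with rfl | hu0
    · simp
    rw [div_lt_iff₀' (by positivity)] at hq1
    push_cast
    nlinarith
  exact H z' huz' hz'u hqz'gt n <| fPSet_subset hzz' (hqz'le.trans (Nat.le_ceil _)) hn

theorem lt_pow_of_mem_fPSet {u : ℕ} {q : ℝ} (hq1 : 1 / (u : ℝ) < q) (hq2 : q < 1)
    (H : ∀ z : ℕ, u ≤ z → z ≤ u ^ 2 → (u : ℝ) - 1 < q * z → ∀ n ∈ fPSet σ z (q * z), n < u)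
    (t : ℕ) : ∀ z n, z ≤ u ^ 2 → q ^ (t + 1) * z ≤ u → n ∈ fPSet σ z u → n < u ^ (t + 1) := by
  have hq0 : 0 < q := lt_of_le_of_lt (by positivity) hq1
  induction t with
  | zero =>
    intro z n _ hqz hn
    simpa using lt_of_mem_fPSet_of_mul_le hq1 hq2 H (by simpa using hqz) hn
  | succ t ih =>
    intro z n hzu hqz hn
    by_cases hqz' : q * z ≤ u
    · exact (lt_of_mem_fPSet_of_mul_le hq1 hq2 H hqz' hn).trans_le (Nat.le_self_pow (by omega) u)
    push Not at hqz'
    have hqzz : q * z ≤ z := mul_le_of_le_one_left z.cast_nonneg hq2.le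
    by_contra! hle
    have hmem : u ∈ fPSet σ z (q * z) := by
      refine mem_fPSet_of_mul_mem_fPSet (L := u ^ (t + 1)) (fun z₁ hz₁ hL => ?_)
        (mem_fPSet_of_le (by rwa [← pow_succ']) hn)
      have hz₁u : z₁ ≤ u ^ 2 := (Nat.cast_le.mp (hz₁.trans_le hqzz).le).trans hzu
      have hqz₁ : q ^ (t + 1) * z₁ ≤ u := calc
        q ^ (t + 1) * z₁ ≤ q ^ (t + 1) * (q * z) := by gcongr
        _ = q ^ (t + 1 + 1) * z := by ring
        _ ≤ u := hqz
      exact (ih z₁ _ hz₁u hqz₁ hL).false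
    have huz : u ≤ z := by exact_mod_cast (hqz'.trans_le hqzz).le
    exact (H z huz hzu (by linarith) u hmem).false

end

theorem pow_ceil_neg_log_div_log_le_inv {q x : ℝ} (hq0 : 0 < q) (hq1 : q < 1) (hx : 0 < x) :
    q ^ ⌈-(Real.log x / Real.log q)⌉₊ ≤ x⁻¹ := by
  have hlogq : Real.log q < 0 := Real.log_neg hq0 hq1
  have hexp : (⌈-(Real.log x / Real.log q)⌉₊ : ℝ) * Real.log q ≤ -Real.log x := by
    have := mul_le_mul_of_nonpos_right (Nat.le_ceil (-(Real.log x / Real.log q))) hlogq.le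
    rwa [neg_mul, div_mul_cancel₀ _ hlogq.ne] at this
  calc q ^ ⌈-(Real.log x / Real.log q)⌉₊
      = Real.exp (⌈-(Real.log x / Real.log q)⌉₊ * Real.log q) := by
        rw [← Real.log_pow, Real.exp_log (by positivity)]
    _ ≤ Real.exp (-Real.log x) := Real.exp_le_exp.mpr hexp
    _ = x⁻¹ := by rw [Real.exp_neg, Real.exp_log hx]

theorem stmt5_general {k : ℕ} (σ : Equiv.Perm (Fin k)) (u : ℕ) (q : ℝ)
    (hq1 : 1 / (u : ℝ) < q) (hq2 : q < 1)
    (h1 : ∀ z : ℕ, u ≤ z → fP σ z (q * z) < u) :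
    fP σ (u ^ 2) (u : ℝ) ≤ u ^ ⌈-(Real.log u / Real.log q)⌉₊ := by
  have hu0 : 0 < u := (Nat.zero_le _).trans_lt (h1 u le_rfl)
  have hq0 : 0 < q := lt_of_le_of_lt (by positivity) hq1
  have hu2 : 2 ≤ u := by
    by_contra! hu
    obtain rfl : u = 1 := by omega
    norm_num at hq1
    linarith
  -- `fP` is an `sSup` in `ℕ`, hence `0` on unbounded sets: `h1` bounds the rows of a matrix only
  -- once its `fPSet` is known to lie inside the bounded `fPSet σ (u ^ 2) u`.
  by_cases hB : BddAbove (fPSet σ (u ^ 2) u)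
  swap
  · rw [fP_eq_sSup_fPSet, Nat.sSup_of_not_bddAbove hB]
    exact Nat.zero_le _
  have H (z : ℕ) (huz : u ≤ z) (hzu : z ≤ u ^ 2) (hqz : (u : ℝ) - 1 < q * z) :
      ∀ n ∈ fPSet σ z (q * z), n < u := by
    have hceil : u ≤ ⌈q * z⌉₊ := by
      obtain ⟨v, rfl⟩ := Nat.exists_eq_add_one_of_ne_zero hu0.ne'
      exact Nat.add_one_le_ceil_iff.mpr (by push_cast at hqz; linarith)
    exact fun n => lt_of_mem_fPSet hB hzu (by exact_mod_cast hceil) (h1 z huz)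
  have hlog : 0 < -(Real.log u / Real.log q) := neg_pos.mpr <|
    div_neg_of_pos_of_neg (Real.log_pos (by exact_mod_cast hu2)) (Real.log_neg hq0 hq2)
  obtain ⟨t, ht⟩ := Nat.exists_eq_add_one_of_ne_zero (Nat.ceil_pos.mpr hlog).ne'
  have hqt : q ^ (t + 1) * ((u ^ 2 : ℕ) : ℝ) ≤ u := by
    have hqu : q ^ (t + 1) * u ≤ 1 := calc
      q ^ (t + 1) * u ≤ (u : ℝ)⁻¹ * u := by
        rw [← ht]
        gcongr
        exact pow_ceil_neg_log_div_log_le_inv hq0 hq2 (by positivity)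
      _ = 1 := inv_mul_cancel₀ (by positivity)
    calc q ^ (t + 1) * ((u ^ 2 : ℕ) : ℝ) = q ^ (t + 1) * u * u := by push_cast; ring
      _ ≤ 1 * u := by gcongr
      _ = u := one_mul _
  rw [fP_eq_sSup_fPSet, ht]
  exact csSup_le' fun n hn => (lt_pow_of_mem_fPSet hq1 hq2 H t _ n le_rfl hqt hn).le

/-- If `f_P(z,qz) < u` for all `z ≥ u`, then `f_P(u², u) ≤ u^⌈-log u / log q⌉`. -/
theorem stmt5 {k : ℕ} (σ : Equiv.Perm (Fin k)) (u : ℕ) (hu : 1 ≤ u) (q : ℝ)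
    (hq1 : 1 / (u : ℝ) < q) (hq2 : q < 1)
    (h1 : ∀ z : ℕ, u ≤ z → fP σ z (q * z) < u) :
    fP σ (u ^ 2) (u : ℝ) ≤ u ^ ⌈-(Real.log u / Real.log q)⌉₊ :=
  stmt5_general σ u q hq1 hq2 h1
end
end

section
/- Let P be a permutation matrix, u ∈ ℕ, and q ∈ (1/u, 1). If ex_P(u) < q·u², then for every z ≥ u, every u×z binary matrix with at least qz 1-entries in every row contains P (i.e., f_P(z, qz) < u). -/
/-!
The first `u` rows of a `P`-avoiding matrix with at least `u` rows and `qz` 1-entries per row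
contain at least `quz` 1-entries. The `u` columns with the largest column sums keep at least a
`u / z` fraction of these, so they form a `u × u` submatrix with at least `qu²` 1-entries. As a
submatrix of a `P`-avoiding matrix it avoids `P`, contradicting `ex_P(u) < qu²`.
-/

open Asymptotics

noncomputable section

open Finset

section Averaging

variable {ι : Type*} [Fintype ι] [DecidableEq ι]

lemma le_of_forall_sum_powersetCard_le {M : Type*} [AddCommMonoid M] [PartialOrder M]
    [IsOrderedCancelAddMonoid M] {c : ι → M} {u : ℕ} {s : Finset ι} (hs : #s = u)
    (hmax : ∀ t ∈ powersetCard u univ, ∑ j ∈ t, c j ≤ ∑ j ∈ s, c j)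
    {i j : ι} (hi : i ∈ s) (hj : j ∉ s) : c j ≤ c i := by
  have hji : j ∉ s.erase i := fun h => hj (mem_of_mem_erase h)
  have hswap : insert j (s.erase i) ∈ powersetCard u univ := by
    rw [mem_powersetCard, card_insert_of_notMem hji, card_erase_add_one hi, hs]
    exact ⟨subset_univ _, rfl⟩
  have := hmax _ hswap
  rw [sum_insert hji, ← add_sum_erase s c hi] at this
  exact le_of_add_le_add_right this

lemma exists_card_eq_mul_sum_le_mul_sum (c : ι → ℕ) {u : ℕ} (hu : u ≤ Fintype.card ι) :
    ∃ s : Finset ι, #s = u ∧ u * ∑ j, c j ≤ Fintype.card ι * ∑ j ∈ s, c j := by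
  obtain ⟨s, hs, hmax⟩ := exists_max_image (powersetCard u univ) (fun t => ∑ j ∈ t, c j)
    (powersetCard_nonempty.2 (by simpa using hu))
  have hsu : #s = u := (mem_powersetCard.1 hs).2
  have hout : ∀ j ∈ sᶜ, u * c j ≤ ∑ i ∈ s, c i := fun j hj => by
    rw [← hsu, ← smul_eq_mul]
    exact card_nsmul_le_sum s c (c j) fun i hi =>
      le_of_forall_sum_powersetCard_le hsu hmax hi (mem_compl.1 hj)
  refine ⟨s, hsu, ?_⟩
  calc u * ∑ j, c j = u * ∑ j ∈ s, c j + ∑ j ∈ sᶜ, u * c j := by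
        rw [← sum_add_sum_compl s c, mul_add, mul_sum sᶜ]
    _ ≤ u * ∑ j ∈ s, c j + #sᶜ • ∑ j ∈ s, c j := by grw [sum_le_card_nsmul _ _ _ hout]
    _ = Fintype.card ι * ∑ j ∈ s, c j := by
        rw [card_compl, hsu, smul_eq_mul, ← add_mul, Nat.add_sub_cancel' hu]

end Averaging

section Matrices

variable {n m : ℕ}

lemma ones_le_mul (A : Fin n → Fin m → Bool) : ones A ≤ n * m := by
  rw [ones, Nat.card_eq_fintype_card]
  simpa using Fintype.card_subtype_le fun p : Fin n × Fin m => A p.1 p.2 = true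

lemma ones_eq_sum_rows (A : Fin n → Fin m → Bool) :
    ones A = ∑ i, Nat.card {j : Fin m // A i j = true} := by
  simp only [ones, Nat.card_eq_fintype_card, Fintype.card_subtype, card_filter,
    Fintype.sum_prod_type]

lemma ones_eq_sum_cols (A : Fin n → Fin m → Bool) :
    ones A = ∑ j, #{i | A i j = true} := by
  simp only [ones_eq_sum_rows, Nat.card_eq_fintype_card, Fintype.card_subtype, card_filter]
  exact sum_comm

lemma mul_le_ones_of_forall_le_card_row (A : Fin n → Fin m → Bool) {y : ℝ}
    (hrow : ∀ i, y ≤ Nat.card {j : Fin m // A i j = true}) : n * y ≤ ones A := by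
  rw [ones_eq_sum_rows, Nat.cast_sum]
  simpa using card_nsmul_le_sum univ _ y fun i _ => hrow i

lemma exists_cols_mul_ones_le (A : Fin n → Fin m → Bool) {u : ℕ} (hu : u ≤ m) :
    ∃ g : Fin u → Fin m, StrictMono g ∧ u * ones A ≤ m * ones fun i j => A i (g j) := by
  obtain ⟨s, hs, hle⟩ :=
    exists_card_eq_mul_sum_le_mul_sum (fun j => #{i | A i j = true}) (u := u) (by simpa)
  refine ⟨s.orderEmbOfFin hs, (s.orderEmbOfFin hs).strictMono, ?_⟩
  rw [ones_eq_sum_cols, ones_eq_sum_cols]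
  conv at hle => rhs; rw [Fintype.card_fin, ← map_orderEmbOfFin_univ s hs, sum_map]
  exact hle

end Matrices

section PatternAvoidance

variable {k : ℕ} {σ : Equiv.Perm (Fin k)}

lemma containsP_of_containsP_submatrix {n m n' m' : ℕ} {A : Fin n → Fin m → Bool}
    {f : Fin n' → Fin n} {g : Fin m' → Fin m} (hf : StrictMono f) (hg : StrictMono g)
    (h : containsP σ fun i j => A (f i) (g j)) : containsP σ A := by
  obtain ⟨f', g', hf', hg', hB⟩ := h
  exact ⟨f ∘ f', g ∘ g', hf.comp hf', hg.comp hg', hB⟩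

lemma ones_le_exP {u : ℕ} {A : Fin u → Fin u → Bool} (hA : ¬ containsP σ A) :
    ones A ≤ exP u σ :=
  le_csSup ⟨u * u, by rintro _ ⟨B, -, rfl⟩; exact ones_le_mul B⟩ ⟨A, hA, rfl⟩

lemma pos_of_exP_lt {u : ℕ} {q : ℝ} (hex : (exP u σ : ℝ) < q * (u : ℝ) ^ 2) : 0 < u := by
  have hpos : 0 < q * (u : ℝ) ^ 2 := (Nat.cast_nonneg _).trans_lt hex
  exact Nat.pos_of_ne_zero <| by rintro rfl; simp at hpos

lemma containsP_of_le_card_row {u z : ℕ} {q : ℝ} (hex : (exP u σ : ℝ) < q * (u : ℝ) ^ 2)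
    (hz : u ≤ z) (A : Fin u → Fin z → Bool)
    (hrow : ∀ i, q * z ≤ Nat.card {j : Fin z // A i j = true}) : containsP σ A := by
  by_contra hA
  have hzpos : (0 : ℝ) < z := by exact_mod_cast (pos_of_exP_lt hex).trans_le hz
  obtain ⟨g, hg, hcols⟩ := exists_cols_mul_ones_le A hz
  have hsquare : ones (fun i j => A i (g j)) ≤ exP u σ :=
    ones_le_exP fun h => hA (containsP_of_containsP_submatrix strictMono_id hg h)
  have hrows := mul_le_ones_of_forall_le_card_row A hrow
  have hchain : (u : ℝ) * (u * (q * z)) ≤ z * exP u σ :=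
    calc (u : ℝ) * (u * (q * z)) ≤ u * ones A := by gcongr
      _ ≤ z * ones (fun i j => A i (g j)) := by exact_mod_cast hcols
      _ ≤ z * exP u σ := by gcongr
  linarith [mul_lt_mul_of_pos_left hex hzpos]

end PatternAvoidance

theorem stmt6_general {k : ℕ} (σ : Equiv.Perm (Fin k)) (u : ℕ) (q : ℝ)
    (hex : (exP u σ : ℝ) < q * (u : ℝ) ^ 2) :
    ∀ z : ℕ, u ≤ z → fP σ z (q * z) < u := by
  intro z hz
  refine (csSup_le' ?_).trans_lt (Nat.pred_lt (pos_of_exP_lt hex).ne')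
  rintro h ⟨A, hA, hrow⟩
  refine Nat.le_pred_of_lt (not_le.1 fun hle => ?_)
  exact hA <| containsP_of_containsP_submatrix (Fin.strictMono_castLE hle) strictMono_id <|
    containsP_of_le_card_row hex hz _ fun i => hrow _

/-- If `ex_P(u) < q·u²`, then for every `z ≥ u`, every `u × z` binary matrix with at least
`qz` 1-entries in every row contains `P`; that is, `f_P(z, qz) < u`. -/
theorem stmt6 {k : ℕ} (σ : Equiv.Perm (Fin k)) (u : ℕ) (hu : 1 ≤ u) (q : ℝ)
    (hq1 : 1 / (u : ℝ) < q) (hq2 : q < 1)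
    (hex : (exP u σ : ℝ) < q * (u : ℝ) ^ 2) :
    ∀ z : ℕ, u ≤ z → fP σ z (q * z) < u :=
  stmt6_general σ u q hex

end
end

section
/- For all positive integers r, k, s, t where s and t are powers of 2 and t ≥ s ≥ 2^{k−1}, we have f_{r,k}(t,s) ≤ r·2^{2k−2}·(t/s)², where f_{r,k}(t,s) is the maximum number of rows in a binary matrix with t columns, each row containing at least s 1-entries, that does not contain the all-ones r×k matrix J_{r,k} as an interval minor. The proof may use the recurrence f_{r,k}(t,s) ≤ 2·f_{r,k}(t/2, s) + 2·f_{r,k−1}(t/2, s/2) valid for even s ≤ t, together with the base cases f_{r,k}(t,s) = 0 for s > t and f_{r,1}(t,s) = r−1 for t ≥ s ≥ 1. -/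
open Asymptotics

noncomputable section

/-- The all-ones matrix `J_{r,k}` is an interval minor of `A`: the rows and columns of `A`
can be partitioned into `r` (resp. `k`) consecutive nonempty intervals such that every
block contains a 1-entry. -/
def hasJminor {n t : ℕ} (r k : ℕ) (A : Fin n → Fin t → Bool) : Prop :=
  ∃ f : Fin n → Fin r, ∃ g : Fin t → Fin k,
    Monotone f ∧ Monotone g ∧ Function.Surjective f ∧ Function.Surjective g ∧
    ∀ (i : Fin r) (j : Fin k), ∃ p q, f p = i ∧ g q = j ∧ A p q = true

/-- `f_{r,k}(t,s)`: the maximum number of rows of a binary matrix with `t` columns,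
at least `s` 1-entries in every row, avoiding `J_{r,k}` as an interval minor. -/
def frk (r k t s : ℕ) : ℕ :=
  sSup {h : ℕ | ∃ A : Fin h → Fin t → Bool, ¬ hasJminor r k A ∧
    ∀ i : Fin h, s ≤ Nat.card {j : Fin t // A i j = true}}

/-!
Split the `2n` columns into two halves. A row with at least `2s` 1-entries either has `2s` of
them in one half, or has at least `s` in one half and at least one in the other; in the latter
case a `J_{r,k}` inside the first half extends, by the other half, to a `J_{r,k+1}`. Hence
`f_{r,k+1}(2n,2s) ≤ 2 f_{r,k+1}(n,2s) + 2 f_{r,k}(n,s)`, and induction on `k` and `log₂ t`,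
starting from `f_{r,1}(t,s) = r - 1` and `f_{r,k}(t,s) = 0` for `s > t`, gives the bound because
`4 ⌊n/2s⌋² ≤ ⌊n/s⌋²`.
-/

open Finset

theorem exists_monotone_extension {m n r : ℕ} {e : Fin m → Fin n} (he : StrictMono e)
    {f : Fin m → Fin r} (hf : Monotone f) (hm : 0 < m) :
    ∃ F : Fin n → Fin r, Monotone F ∧ ∀ i, F (e i) = f i := by
  -- `F p` is `f` at the last `i` with `e i ≤ p` (at `0` if there is none).
  refine ⟨fun p => f ⟨#{i | e i ≤ p} - 1, ?_⟩, fun p q hpq => hf ?_,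
    fun i => congrArg f ?_⟩
  · have := card_le_univ {i | e i ≤ p}
    rw [Fintype.card_fin] at this
    omega
  · exact Fin.mk_le_mk.2 <| Nat.sub_le_sub_right
      (card_le_card <| monotone_filter_right _ fun _ _ h => h.trans hpq) 1
  · have hcard : #{i' | e i' ≤ e i} = i + 1 := by
      simp_rw [he.le_iff_le, filter_ge_eq_Iic, Fin.card_Iic]
    ext
    simp [hcard]

theorem hasJminor_of_submatrix {m u h t r k : ℕ} (hr : 0 < r) (hk : 0 < k)
    {A : Fin h → Fin t → Bool} {e : Fin m → Fin h} {c : Fin u → Fin t} (he : StrictMono e)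
    (hc : StrictMono c)
    (H : hasJminor r k fun i j => A (e i) (c j)) : hasJminor r k A := by
  obtain ⟨f, g, hf, hg, hfs, hgs, hw⟩ := H
  obtain ⟨F, hF, hFe⟩ := exists_monotone_extension he hf (hfs ⟨0, hr⟩).choose.pos
  obtain ⟨G, hG, hGc⟩ := exists_monotone_extension hc hg (hgs ⟨0, hk⟩).choose.pos
  refine ⟨F, G, hF, hG, fun i => ?_, fun j => ?_, fun i j => ?_⟩
  · obtain ⟨p, rfl⟩ := hfs i
    exact ⟨e p, hFe p⟩
  · obtain ⟨q, rfl⟩ := hgs j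
    exact ⟨c q, hGc q⟩
  · obtain ⟨p, q, rfl, rfl, hA⟩ := hw i j
    exact ⟨e p, c q, hFe p, hGc q, hA⟩

theorem Fin.monotone_addCases {α : Type*} [Preorder α] {n m : ℕ} {u : Fin n → α}
    {v : Fin m → α} (hu : Monotone u) (hv : Monotone v) (huv : ∀ i j, u i ≤ v j) :
    Monotone (Fin.addCases u v : Fin (n + m) → α) := by
  intro p q hpq
  induction p using Fin.addCases <;> induction q using Fin.addCases <;>
    simp only [Fin.addCases_left, Fin.addCases_right] at hpq ⊢
  · exact hu ((Fin.strictMono_castAdd m).le_iff_le.1 hpq)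
  · exact huv _ _
  · rw [Fin.le_def, Fin.val_natAdd, Fin.val_castAdd] at hpq
    omega
  · exact hv ((Fin.strictMono_natAdd n).le_iff_le.1 hpq)

theorem hasJminor_append_right {h n m r k : ℕ} (hr : 0 < r) {A : Fin h → Fin (n + m) → Bool}
    (H : hasJminor r k fun i j => A i (Fin.castAdd m j))
    (hright : ∀ i, ∃ j, A i (Fin.natAdd n j) = true) : hasJminor r (k + 1) A := by
  obtain ⟨f, g, hf, hg, hfs, hgs, hw⟩ := H
  refine ⟨f, Fin.addCases (fun j => (g j).castSucc) fun _ => Fin.last k, hf,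
    Fin.monotone_addCases (Fin.strictMono_castSucc.monotone.comp hg) monotone_const
      fun _ _ => Fin.le_last _, hfs, fun i => ?_, fun i j => ?_⟩
  · induction i using Fin.lastCases with
    | last =>
      obtain ⟨q, -⟩ := hright (hfs ⟨0, hr⟩).choose
      exact ⟨Fin.natAdd n q, by simp⟩
    | cast j =>
      obtain ⟨q, hq⟩ := hgs j
      exact ⟨Fin.castAdd m q, by simp [hq]⟩
  · induction j using Fin.lastCases with
    | last =>
      obtain ⟨p, rfl⟩ := hfs i
      obtain ⟨q, hq⟩ := hright p
      exact ⟨p, Fin.natAdd n q, rfl, by simp, hq⟩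
    | cast j =>
      obtain ⟨p, q, hp, rfl, hA⟩ := hw i j
      exact ⟨p, Fin.castAdd m q, hp, by simp, hA⟩

theorem hasJminor_append_left {h n m r k : ℕ} (hr : 0 < r) {A : Fin h → Fin (n + m) → Bool}
    (H : hasJminor r k fun i j => A i (Fin.natAdd n j))
    (hleft : ∀ i, ∃ j, A i (Fin.castAdd m j) = true) : hasJminor r (k + 1) A := by
  obtain ⟨f, g, hf, hg, hfs, hgs, hw⟩ := H
  refine ⟨f, Fin.addCases (fun _ => 0) fun j => (g j).succ, hf,
    Fin.monotone_addCases monotone_const (Fin.strictMono_succ.monotone.comp hg)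
      fun _ _ => Fin.zero_le _, hfs, fun i => ?_, fun i j => ?_⟩
  · induction i using Fin.cases with
    | zero =>
      obtain ⟨q, -⟩ := hleft (hfs ⟨0, hr⟩).choose
      exact ⟨Fin.castAdd m q, by simp⟩
    | succ j =>
      obtain ⟨q, hq⟩ := hgs j
      exact ⟨Fin.natAdd n q, by simp [hq]⟩
  · induction j using Fin.cases with
    | zero =>
      obtain ⟨p, rfl⟩ := hfs i
      obtain ⟨q, hq⟩ := hleft p
      exact ⟨p, Fin.castAdd m q, rfl, by simp, hq⟩
    | succ j =>
      obtain ⟨p, q, hp, rfl, hA⟩ := hw i j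
      exact ⟨p, Fin.natAdd n q, hp, by simp, hA⟩

theorem Fin.card_filter_univ_add {n m : ℕ} (p : Fin (n + m) → Prop) [DecidablePred p] :
    #{j | p j} = #{j | p (Fin.castAdd m j)} + #{j | p (Fin.natAdd n j)} := by
  simp only [card_filter, Fin.sum_univ_add]

/-- `f_{r,k}(t,s) ≤ B`, stated for every matrix so as not to depend on the value of `sSup` on an
unbounded set. -/
def RowBound (r k t s B : ℕ) : Prop :=
  ∀ ⦃h : ℕ⦄ (A : Fin h → Fin t → Bool), ¬ hasJminor r k A →
    (∀ i, s ≤ #{j | A i j = true}) → h ≤ B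

namespace RowBound

variable {r k t s B : ℕ}

theorem mono {B' : ℕ} (hB : RowBound r k t s B) (hBB' : B ≤ B') : RowBound r k t s B' :=
  fun _ A hA hrow => (hB A hA hrow).trans hBB'

theorem frk_le (hB : RowBound r k t s B) : frk r k t s ≤ B :=
  csSup_le' fun _ ⟨A, hA, hrow⟩ => hB A hA fun i => by
    simpa only [Nat.card_eq_fintype_card, Fintype.card_subtype] using hrow i

theorem of_lt (hts : t < s) : RowBound r k t s B := by
  intro h A _ hrow
  rcases Nat.eq_zero_or_pos h with rfl | hh
  · exact B.zero_le
  · have := (hrow ⟨0, hh⟩).trans (card_le_univ _)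
    simp only [Fintype.card_fin] at this
    omega

theorem single_column (hr : 0 < r) (hs : 0 < s) : RowBound r 1 t s (r - 1) := by
  intro h A hA hrow
  by_contra! hrh
  have hone : ∀ p, ∃ q, A p q = true := fun p => by
    simpa [filter_nonempty_iff] using card_pos.1 (hs.trans_le (hrow p))
  refine hA ⟨fun p => ⟨min p (r - 1), by omega⟩, fun _ => 0,
    fun p q hpq => Fin.mk_le_mk.2 (min_le_min_right _ hpq), monotone_const,
    fun i => ⟨⟨i, by omega⟩, Fin.ext (min_eq_left (Nat.le_sub_one_of_lt i.isLt))⟩,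
    fun _ => ⟨(hone ⟨0, by omega⟩).choose, Subsingleton.elim _ _⟩, fun i j => ?_⟩
  obtain ⟨q, hq⟩ := hone ⟨i, by omega⟩
  exact ⟨⟨i, by omega⟩, q, Fin.ext (min_eq_left (Nat.le_sub_one_of_lt i.isLt)),
    Subsingleton.elim _ _, hq⟩

theorem card_le {u h : ℕ} (hB : RowBound r k u s B) {S : Finset (Fin h)}
    {M : Fin h → Fin u → Bool}
    (hM : ∀ {m} {e : Fin m → Fin h}, StrictMono e → (∀ i, e i ∈ S) →
      ¬ hasJminor r k fun i => M (e i))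
    (hS : ∀ i ∈ S, s ≤ #{j | M i j = true}) : #S ≤ B :=
  hB _ (hM (S.orderEmbOfFin rfl).strictMono (S.orderEmbOfFin_mem rfl))
    fun i => hS _ (S.orderEmbOfFin_mem rfl i)

theorem double {n B₁ B₂ : ℕ} (hr : 0 < r) (h₁ : RowBound r (k + 1) n (2 * s) B₁)
    (h₂ : RowBound r k n s B₂) : RowBound r (k + 1) (n + n) (2 * s) (2 * B₁ + 2 * B₂) := by
  intro h A hA hrow
  set L : Fin h → Fin n → Bool := fun i j => A i (Fin.castAdd n j)
  set R : Fin h → Fin n → Bool := fun i j => A i (Fin.natAdd n j)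
  set cL : Fin h → ℕ := fun i => #{j | L i j = true}
  set cR : Fin h → ℕ := fun i => #{j | R i j = true}
  have hsplit i : 2 * s ≤ cL i + cR i := (hrow i).trans_eq (Fin.card_filter_univ_add _)
  have hex {M : Fin h → Fin n → Bool} {i} (hi : 0 < #{j | M i j = true}) :
      ∃ j, M i j = true := by
    simpa [filter_nonempty_iff] using card_pos.1 hi
  set S₁ : Finset (Fin h) := {i | 2 * s ≤ cL i}
  set S₂ : Finset (Fin h) := {i | 2 * s ≤ cR i}
  set S₃ : Finset (Fin h) := {i | s ≤ cL i ∧ 0 < cR i}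
  set S₄ : Finset (Fin h) := {i | s ≤ cR i ∧ 0 < cL i}
  have hcover : univ ⊆ S₁ ∪ S₂ ∪ S₃ ∪ S₄ := by
    intro i _
    have := hsplit i
    simp only [S₁, S₂, S₃, S₄, mem_union, mem_filter, mem_univ, true_and]
    omega
  have hS₁ : #S₁ ≤ B₁ := h₁.card_le (M := L)
    (fun he _ H => hA (hasJminor_of_submatrix hr k.succ_pos he (Fin.strictMono_castAdd n) H))
    fun i hi => (mem_filter.1 hi).2
  have hS₂ : #S₂ ≤ B₁ := h₁.card_le (M := R)
    (fun he _ H => hA (hasJminor_of_submatrix hr k.succ_pos he (Fin.strictMono_natAdd n) H))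
    fun i hi => (mem_filter.1 hi).2
  have hS₃ : #S₃ ≤ B₂ := h₂.card_le (M := L)
    (fun he heS H => hA (hasJminor_of_submatrix (c := id) hr k.succ_pos he strictMono_id
      (hasJminor_append_right hr H fun i => hex (mem_filter.1 (heS i)).2.2)))
    fun i hi => (mem_filter.1 hi).2.1
  have hS₄ : #S₄ ≤ B₂ := h₂.card_le (M := R)
    (fun he heS H => hA (hasJminor_of_submatrix (c := id) hr k.succ_pos he strictMono_id
      (hasJminor_append_left hr H fun i => hex (mem_filter.1 (heS i)).2.2)))
    fun i hi => (mem_filter.1 hi).2.1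
  calc h = #(univ : Finset (Fin h)) := (card_fin h).symm
    _ ≤ #(S₁ ∪ S₂ ∪ S₃ ∪ S₄) := card_le_card hcover
    _ ≤ #S₁ + #S₂ + #S₃ + #S₄ := by
      linarith [card_union_le (S₁ ∪ S₂ ∪ S₃) S₄, card_union_le (S₁ ∪ S₂) S₃,
        card_union_le S₁ S₂]
    _ ≤ 2 * B₁ + 2 * B₂ := by omega

end RowBound

theorem four_mul_div_two_mul_sq_le (n s : ℕ) : 4 * (n / (2 * s)) ^ 2 ≤ (n / s) ^ 2 := by
  rw [mul_comm 2 s, ← Nat.div_div_eq_div_mul]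
  calc 4 * (n / s / 2) ^ 2 = (2 * (n / s / 2)) ^ 2 := by ring
    _ ≤ (n / s) ^ 2 := Nat.pow_le_pow_left (Nat.mul_div_le _ 2) 2

theorem rowBound_two_pow {r : ℕ} (hr : 0 < r) (k b m : ℕ) (hm : 0 < m) :
    RowBound r (k + 1) (2 ^ b) (2 ^ k * m) (r * 4 ^ k * (2 ^ b / (2 ^ k * m)) ^ 2) := by
  induction k generalizing b m with
  | zero =>
    simp only [pow_zero, one_mul, mul_one]
    rcases lt_or_ge (2 ^ b) m with hlt | hle
    · exact .of_lt hlt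
    · have : 1 ≤ 2 ^ b / m := (Nat.one_le_div_iff hm).2 hle
      refine (RowBound.single_column hr hm).mono ?_
      calc r - 1 ≤ r * 1 ^ 2 := by omega
        _ ≤ r * (2 ^ b / m) ^ 2 := by gcongr
  | succ k ihk =>
    induction b with
    | zero =>
      rw [pow_zero]
      exact .of_lt (one_lt_mul_of_lt_of_le (Nat.one_lt_two_pow k.succ_ne_zero) hm)
    | succ b ihb =>
      set s := 2 ^ k * m
      have hs : 2 ^ (k + 1) * m = 2 * s := by ring
      rw [hs] at ihb ⊢
      rw [pow_succ, mul_two]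
      refine (ihb.double hr (ihk b m hm)).mono ?_
      rw [← two_mul, Nat.mul_div_mul_left _ _ two_pos]
      have := four_mul_div_two_mul_sq_le (2 ^ b) s
      calc 2 * (r * 4 ^ (k + 1) * (2 ^ b / (2 * s)) ^ 2) + 2 * (r * 4 ^ k * (2 ^ b / s) ^ 2)
          = r * 4 ^ k * (2 * (4 * (2 ^ b / (2 * s)) ^ 2) + 2 * (2 ^ b / s) ^ 2) := by ring
        _ ≤ r * 4 ^ k * (2 * (2 ^ b / s) ^ 2 + 2 * (2 ^ b / s) ^ 2) := by gcongr
        _ = r * 4 ^ (k + 1) * (2 ^ b / s) ^ 2 := by ring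

theorem stmt7_general (r k s t : ℕ) (hr : 1 ≤ r) (hk : 1 ≤ k)
    (hs : ∃ a : ℕ, s = 2 ^ a) (ht : ∃ b : ℕ, t = 2 ^ b)
    (hks : 2 ^ (k - 1) ≤ s) :
    frk r k t s ≤ r * 2 ^ (2 * k - 2) * (t / s) ^ 2 := by
  obtain ⟨a, rfl⟩ := hs
  obtain ⟨b, rfl⟩ := ht
  obtain ⟨k, rfl⟩ := Nat.exists_eq_add_of_le' hk
  have hka : k ≤ a := (Nat.pow_le_pow_iff_right one_lt_two).1 hks
  have hB := rowBound_two_pow hr k b (2 ^ (a - k)) (by positivity)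
  rw [← pow_add, Nat.add_sub_cancel' hka] at hB
  rw [show 2 * (k + 1) - 2 = 2 * k by omega, pow_mul]
  exact hB.frk_le

/-- For `s, t` powers of two with `t ≥ s ≥ 2^(k-1)`, we have
`f_{r,k}(t,s) ≤ r·2^(2k-2)·(t/s)²`. -/
theorem stmt7 (r k s t : ℕ) (hr : 1 ≤ r) (hk : 1 ≤ k)
    (hs : ∃ a : ℕ, s = 2 ^ a) (ht : ∃ b : ℕ, t = 2 ^ b)
    (hst : s ≤ t) (hks : 2 ^ (k - 1) ≤ s) :
    frk r k t s ≤ r * 2 ^ (2 * k - 2) * (t / s) ^ 2 :=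
  stmt7_general r k s t hr hk hs ht hks
end
end

section
/- For every integer k ≥ 6 divisible by 6, every 2k×2k binary matrix with at most k²/18 0-entries contains the cross matrix X_k; equivalently, ex_{X_k}(2k) < (2k)² − k²/18. -/
open Asymptotics

noncomputable section

/-- The cross matrix `X_k` (1-indexed: 1-entries at `i = j` and `i + j = k + 1`). -/
def crossX (k : ℕ) : Fin k → Fin k → Bool :=
  fun i j => decide (i = j ∨ i.val + j.val = k - 1)

/-!
Fold the `2k × 2k` matrix onto its upper-left `k × k` quadrant, calling a cell full when it and
its three mirror images are 1-entries; distinct non-full cells give distinct 0-entries. A chain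
of `k/2` full cells increasing in both coordinates, together with its mirror images, is a copy
of `X_k`. Such a chain exists: with `k = 6a`, if each of the diagonals `j = i + o`, `o < a`,
had fewer than `3a` full cells, each would have at least `2a + 2` non-full ones, and
`a (2a + 2) > 2a² = k²/18`.
-/
open Finset

section Diagonals

def diagCell (k o : ℕ) (i : Fin (k - o)) : Fin k × Fin k :=
  (⟨i, i.isLt.trans_le (Nat.sub_le k o)⟩, ⟨i + o, Nat.add_lt_of_lt_sub i.isLt⟩)

variable {k : ℕ}

lemma diagCell_injective (o : ℕ) : Function.Injective (diagCell k o) := by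
  intro i j h
  simpa [diagCell, Fin.ext_iff] using congrArg (fun p => (p.1 : ℕ)) h

lemma eq_of_diagCell_eq {o o' : ℕ} {i : Fin (k - o)} {j : Fin (k - o')}
    (h : diagCell k o i = diagCell k o' j) : o = o' := by
  simp only [diagCell, Prod.mk.injEq, Fin.mk.injEq] at h
  omega

variable (P : Fin k × Fin k → Prop) [DecidablePred P]

lemma exists_chain_of_le_card_diag {m o : ℕ}
    (h : m ≤ #(univ.filter fun i => P (diagCell k o i))) :
    ∃ r c : Fin m → Fin k, StrictMono r ∧ StrictMono c ∧ ∀ t, P (r t, c t) := by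
  let e := (univ.filter fun i => P (diagCell k o i)).orderEmbOfCardLe h
  refine ⟨fun t => (diagCell k o (e t)).1, fun t => (diagCell k o (e t)).2,
    fun s t hst => e.strictMono hst, fun s t hst => ?_, fun t => ?_⟩
  · exact Nat.add_lt_add_right (e.strictMono hst) o
  · simpa using orderEmbOfCardLe_mem _ h t

lemma sum_card_diag_le (a : ℕ) :
    ∑ o ∈ range a, #(univ.filter fun i => P (diagCell k o i)) ≤ #(univ.filter P) := by
  calc ∑ o ∈ range a, #(univ.filter fun i => P (diagCell k o i))
      = #((range a).biUnion fun o => (univ.filter fun i => P (diagCell k o i)).image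
          (diagCell k o)) := by
        rw [card_biUnion]
        · simp only [card_image_of_injective _ (diagCell_injective _)]
        · intro o _ o' _ hoo'
          simp only [Function.onFun, disjoint_left, mem_image]
          rintro _ ⟨i, -, rfl⟩ ⟨j, -, hj⟩
          exact hoo' (eq_of_diagCell_eq hj).symm
    _ ≤ #(univ.filter P) := card_le_card <| by
        intro p
        simp only [mem_biUnion, mem_image, mem_filter, mem_univ, true_and]
        rintro ⟨o, -, i, hi, rfl⟩
        exact hi

theorem exists_chain_of_card_filter_not_lt {m a : ℕ}
    (h : #(univ.filter fun p => ¬ P p) + a * m < a * (k + 2 - a)) :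
    ∃ r c : Fin m → Fin k, StrictMono r ∧ StrictMono c ∧ ∀ t, P (r t, c t) := by
  by_contra hno
  have hdiag : ∀ o ∈ range a,
      k + 2 - a ≤ m + #(univ.filter fun i => ¬ P (diagCell k o i)) := by
    intro o ho
    have hgood : #(univ.filter fun i => P (diagCell k o i)) < m := by
      by_contra! hle
      exact hno (exists_chain_of_le_card_diag P hle)
    have hsplit := card_filter_add_card_filter_not (s := univ) fun i => P (diagCell k o i)
    rw [card_univ, Fintype.card_fin] at hsplit
    have hoa := mem_range.mp ho
    omega
  have hbad := sum_card_diag_le (fun p => ¬ P p) a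
  have hsum := sum_le_sum hdiag
  simp only [sum_const, card_range, smul_eq_mul, sum_add_distrib] at hsum
  omega

end Diagonals

section Folding

variable {n n' : ℕ} (A : Fin n → Fin n' → Bool)

def IsFullCell (p : Fin n × Fin n') : Prop :=
  A p.1 p.2 ∧ A p.1 p.2.rev ∧ A p.1.rev p.2 ∧ A p.1.rev p.2.rev

lemma zeros_eq_card : zeros A = #(univ.filter fun q : Fin n × Fin n' => A q.1 q.2 = false) := by
  rw [zeros, Nat.card_eq_fintype_card, Fintype.card_subtype]

lemma min_rev_rev {i : Fin n} (h : i ≤ i.rev) : min i.rev i.rev.rev = i := by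
  rw [Fin.rev_rev, min_eq_right h]

-- The folding `q ↦ (min q.1 q.1.rev, min q.2 q.2.rev)` maps some 0-entry onto every non-full
-- cell of the upper-left quadrant.
lemma card_le_zeros_of_not_isFullCell (S : Finset (Fin n × Fin n'))
    (hS : ∀ p ∈ S, p.1 ≤ p.1.rev ∧ p.2 ≤ p.2.rev ∧ ¬ IsFullCell A p) :
    #S ≤ zeros A := by
  rw [zeros_eq_card]
  refine (card_le_card fun p hp => ?_).trans
    (card_image_le (f := fun q : Fin n × Fin n' => (min q.1 q.1.rev, min q.2 q.2.rev)))
  obtain ⟨h1, h2, hbad⟩ := hS p hp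
  by_contra hnot
  have hentry : ∀ i j, min i i.rev = p.1 → min j j.rev = p.2 → A i j = true := by
    intro i j hi hj
    by_contra hA
    exact hnot (mem_image.mpr ⟨(i, j), by simpa using hA, by simp [hi, hj]⟩)
  exact hbad ⟨hentry _ _ (min_eq_left h1) (min_eq_left h2),
    hentry _ _ (min_eq_left h1) (min_rev_rev h2), hentry _ _ (min_rev_rev h1) (min_eq_left h2),
    hentry _ _ (min_rev_rev h1) (min_rev_rev h2)⟩

end Folding

section Mirror

variable {m n : ℕ}

def mirror (r : Fin m → Fin n) : Fin (m + m) → Fin n :=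
  Fin.append r fun t => (r t.rev).rev

@[simp] lemma mirror_castAdd (r : Fin m → Fin n) (t : Fin m) :
    mirror r (Fin.castAdd m t) = r t :=
  Fin.append_left _ _ t

@[simp] lemma mirror_natAdd (r : Fin m → Fin n) (t : Fin m) :
    mirror r (Fin.natAdd m t) = (r t.rev).rev :=
  Fin.append_right _ _ t

lemma strictMono_mirror {r : Fin m → Fin n} (hr : StrictMono r) (hhalf : ∀ t, r t < (r t).rev) :
    StrictMono (mirror r) := by
  intro i j hij
  induction i using Fin.addCases with
  | left s =>
    induction j using Fin.addCases with
    | left t =>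
      simp only [mirror_castAdd]
      exact hr hij
    | right t =>
      have := hhalf s
      have := hhalf t.rev
      simp only [mirror_castAdd, mirror_natAdd, Fin.lt_def, Fin.val_rev] at *
      omega
  | right s =>
    induction j using Fin.addCases with
    | left t =>
      simp only [Fin.lt_def, Fin.val_castAdd, Fin.val_natAdd] at hij
      omega
    | right t =>
      simp only [mirror_natAdd, Fin.rev_lt_rev]
      exact hr (Fin.rev_lt_rev.mpr ((Fin.natAdd_lt_natAdd_iff m).mp hij))

end Mirror

-- The chain is the upper-left arm of the cross; its three mirror images are the other arms.
theorem containsB_crossX_of_chain {m n n' : ℕ} (A : Fin n → Fin n' → Bool)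
    {r : Fin m → Fin n} {c : Fin m → Fin n'} (hr : StrictMono r) (hc : StrictMono c)
    (hr' : ∀ t, r t < (r t).rev) (hc' : ∀ t, c t < (c t).rev)
    (hfull : ∀ t, IsFullCell A (r t, c t)) : containsB (crossX (m + m)) A := by
  refine ⟨mirror r, mirror c, strictMono_mirror hr hr', strictMono_mirror hc hc',
    fun i j hij => ?_⟩
  simp only [crossX, decide_eq_true_eq, Fin.ext_iff] at hij
  induction i using Fin.addCases with
  | left s =>
    induction j using Fin.addCases with
    | left t =>
      simp only [Fin.val_castAdd] at hij
      obtain rfl : s = t := Fin.ext (by omega)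
      simpa only [mirror_castAdd] using (hfull s).1
    | right t =>
      simp only [Fin.val_castAdd, Fin.val_natAdd] at hij
      obtain rfl : s = t.rev := Fin.ext (by rw [Fin.val_rev]; omega)
      simpa only [mirror_castAdd, mirror_natAdd] using (hfull t.rev).2.1
  | right s =>
    induction j using Fin.addCases with
    | left t =>
      simp only [Fin.val_castAdd, Fin.val_natAdd] at hij
      obtain rfl : t = s.rev := Fin.ext (by rw [Fin.val_rev]; omega)
      simpa only [mirror_castAdd, mirror_natAdd] using (hfull s.rev).2.2.1
    | right t =>
      simp only [Fin.val_natAdd] at hij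
      obtain rfl : s = t := Fin.ext (by omega)
      simpa only [mirror_natAdd] using (hfull s.rev).2.2.2

/-- For `k ≥ 6` divisible by `6`, every `2k × 2k` binary matrix with at most `k²/18`
0-entries contains `X_k`. -/
theorem stmt9 (k : ℕ) (hk : 6 ≤ k) (hdvd : 6 ∣ k)
    (A : Fin (2 * k) → Fin (2 * k) → Bool) (hA : zeros A ≤ k ^ 2 / 18) :
    containsB (crossX k) A := by
  classical
  obtain ⟨a, rfl⟩ := hdvd
  let ι : Fin (6 * a) ↪o Fin (2 * (6 * a)) := Fin.castLEOrderEmb (by omega)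
  have hlow : ∀ i, ι i < (ι i).rev := fun i => by
    simp only [ι, Fin.castLEOrderEmb_apply, Fin.lt_def, Fin.val_rev, Fin.val_castLE]
    omega
  let P : Fin (6 * a) × Fin (6 * a) → Prop := fun p => IsFullCell A (ι p.1, ι p.2)
  have hbad : #(univ.filter fun p => ¬ P p) ≤ 2 * a ^ 2 :=
    calc #(univ.filter fun p => ¬ P p)
        = #((univ.filter fun p => ¬ P p).map (ι.toEmbedding.prodMap ι.toEmbedding)) :=
          (card_map _).symm
      _ ≤ zeros A := card_le_zeros_of_not_isFullCell A _ <| by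
          simp only [mem_map, mem_filter, mem_univ, true_and]
          rintro _ ⟨p, hp, rfl⟩
          exact ⟨(hlow _).le, (hlow _).le, hp⟩
      _ ≤ 2 * a ^ 2 := by
          rwa [show (6 * a) ^ 2 = 18 * (2 * a ^ 2) by ring, Nat.mul_div_cancel_left _ (by norm_num)]
            at hA
  obtain ⟨r, c, hr, hc, hrc⟩ := exists_chain_of_card_filter_not_lt (m := 3 * a) (a := a) P <| by
    rw [show 6 * a + 2 - a = 5 * a + 2 by omega]
    nlinarith
  have hcross := containsB_crossX_of_chain A (ι.strictMono.comp hr) (ι.strictMono.comp hc)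
    (fun t => hlow _) (fun t => hlow _) hrc
  rwa [show 3 * a + 3 * a = 6 * a by ring] at hcross
end
end

section
/- The expected number of linear extensions of a random (d−1)-dimensional partial order on [n] equals n! · Q_d(n), where Q_d(n) is the probability that a random d-dimensional partial order on [n] is an antichain. -/
/-!
Reversing a linear order `ρ` and adjoining it as a last coordinate turns a pair
`(τ, ρ)`, with `ρ` a linear extension of the `(d-1)`-dimensional order of `τ`, into a
`d`-tuple whose order is an antichain, and this is a bijection: `ρ` extends a strict order
exactly when no pair is ordered both by that order and by the reverse of `ρ`. Hence the
number of such pairs is `n!^d · Q_d(n)`, and dividing by `n!^(d-1)` gives the expectation.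
-/

open Asymptotics

noncomputable section

/-- `Q_d(n)`: the probability that a random `d`-dimensional partial order on `[n]`
(the intersection of `d` independent uniform linear orders) is an antichain. -/
def Qd (d n : ℕ) : ℝ :=
  (Nat.card {σ : Fin d → Equiv.Perm (Fin n) //
      ∀ a b : Fin n, (∀ i, σ i a < σ i b) → False} : ℝ) / (n.factorial : ℝ) ^ d

open Equiv

theorem forall_rel_imp_lt_iff {α β : Type*} [LinearOrder β] {r : α → α → Prop}
    (hr : ∀ a, ¬ r a a) {f : α → β} (hf : Function.Injective f) :
    (∀ a b, r a b → f a < f b) ↔ ∀ a b, r a b → f b < f a → False := by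
  refine ⟨fun h a b hab hba => (h a b hab).asymm hba, fun h a b hab => ?_⟩
  refine lt_of_le_of_ne (not_lt.mp (h a b hab)) fun he => ?_
  exact hr a (hf he ▸ hab)

theorem Fin.revPerm_mul_apply_lt_iff {n : ℕ} (ρ : Perm (Fin n)) (a b : Fin n) :
    (Fin.revPerm * ρ : Perm (Fin n)) a < (Fin.revPerm * ρ : Perm (Fin n)) b ↔ ρ b < ρ a := by
  simp only [Perm.mul_apply, Fin.revPerm_apply, Fin.rev_lt_rev]

theorem isLinearExtension_iff_snoc_revPerm_isAntichain {m n : ℕ}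
    (τ : Fin (m + 1) → Perm (Fin n)) (ρ : Perm (Fin n)) :
    (∀ a b : Fin n, (∀ i, τ i a < τ i b) → ρ a < ρ b) ↔
      ∀ a b : Fin n, (∀ i, (Fin.snoc τ (Fin.revPerm * ρ) : Fin (m + 2) → Perm (Fin n)) i a <
        (Fin.snoc τ (Fin.revPerm * ρ) : Fin (m + 2) → Perm (Fin n)) i b) → False := by
  rw [forall_rel_imp_lt_iff (fun a h => (h 0).false) ρ.injective]
  refine forall₂_congr fun a b => ?_
  rw [Fin.forall_iff_castSucc (n := m + 1)]
  simp only [Fin.snoc_last, Fin.snoc_castSucc, Fin.revPerm_mul_apply_lt_iff]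
  tauto

def linearExtensionSigmaEquivAntichain (m n : ℕ) :
    (Σ τ : Fin (m + 1) → Perm (Fin n),
      {ρ : Perm (Fin n) // ∀ a b : Fin n, (∀ i, τ i a < τ i b) → ρ a < ρ b}) ≃
    {σ : Fin (m + 2) → Perm (Fin n) // ∀ a b : Fin n, (∀ i, σ i a < σ i b) → False} :=
  (subtypeProdEquivSigmaSubtype _).symm.trans <|
    subtypeEquiv ((prodComm _ _).trans <|
        (prodCongr (Equiv.mulLeft Fin.revPerm) (Equiv.refl _)).trans
          (Fin.snocEquiv fun _ => Perm (Fin n)))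
      fun p => isLinearExtension_iff_snoc_revPerm_isAntichain p.1 p.2

theorem sum_card_linearExtensions_eq_card_antichains (m n : ℕ) :
    ∑ τ : Fin (m + 1) → Perm (Fin n),
        Nat.card {ρ : Perm (Fin n) // ∀ a b : Fin n, (∀ i, τ i a < τ i b) → ρ a < ρ b} =
      Nat.card {σ : Fin (m + 2) → Perm (Fin n) //
        ∀ a b : Fin n, (∀ i, σ i a < σ i b) → False} := by
  rw [← Nat.card_sigma, Nat.card_congr (linearExtensionSigmaEquivAntichain m n)]

theorem stmt12_general (d n : ℕ) (hd : 2 ≤ d) :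
    (∑ τ : Fin (d - 1) → Equiv.Perm (Fin n),
        (Nat.card {ρ : Equiv.Perm (Fin n) //
          ∀ a b : Fin n, (∀ i, τ i a < τ i b) → ρ a < ρ b} : ℝ)) /
      (n.factorial : ℝ) ^ (d - 1)
    = (n.factorial : ℝ) * Qd d n := by
  obtain ⟨m, rfl⟩ : ∃ m, d = m + 2 := ⟨d - 2, by omega⟩
  have hfac : (n.factorial : ℝ) ≠ 0 := Nat.cast_ne_zero.mpr n.factorial_ne_zero
  rw [Qd, show m + 2 - 1 = m + 1 from rfl, ← Nat.cast_sum,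
    sum_card_linearExtensions_eq_card_antichains]
  field_simp
  ring

/-- The expected number of linear extensions of a random `(d-1)`-dimensional partial
order on `[n]` equals `n! · Q_d(n)`. -/
theorem stmt12 (d n : ℕ) (hd : 2 ≤ d) (hn : 1 ≤ n) :
    (∑ τ : Fin (d - 1) → Equiv.Perm (Fin n),
        (Nat.card {ρ : Equiv.Perm (Fin n) //
          ∀ a b : Fin n, (∀ i, τ i a < τ i b) → ρ a < ρ b} : ℝ)) /
      (n.factorial : ℝ) ^ (d - 1)
    = (n.factorial : ℝ) * Qd d n :=
  stmt12_general d n hd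
end
end

section
/- Let d, l, m ≥ 1 and let I^d_k denote the d-dimensional k-permutation matrix with 1-entries at (i,i,…,i) for i ∈ [k]. Then |S_{I^d_{l+1}}(lm)| ≥ |S_{I^d_2}(m)|^l · C(lm; m,…,m)^{d−1}, where C(lm; m,…,m) = (lm)!/(m!)^l is the multinomial coefficient. -/
open Asymptotics

noncomputable section

/-- A `d`-dimensional binary matrix `P` of size `a × ⋯ × a` is contained in `A` of size
`n × ⋯ × n` if there are `d` strictly increasing maps sending 1-entries of `P` to 1-entries
of `A`. -/
def containsT {d a n : ℕ} (P : (Fin d → Fin a) → Bool) (A : (Fin d → Fin n) → Bool) : Prop :=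
  ∃ f : Fin d → (Fin a → Fin n), (∀ i, StrictMono (f i)) ∧
    ∀ x, P x = true → A (fun i => f i (x i)) = true

/-- `M` is a `d`-dimensional `n`-permutation matrix: its 1-entries are the positions
`(π 0 a, …, π (d-1) a)` for `a ∈ [n]`, where the `π i` are permutations of `[n]`. -/
def isPermTensor {d n : ℕ} (M : (Fin d → Fin n) → Bool) : Prop :=
  ∃ π : Fin d → Equiv.Perm (Fin n), ∀ x, (M x = true ↔ ∃ a, ∀ i, x i = π i a)

/-- `|S_P(n)|`: the number of `d`-dimensional `n`-permutation matrices avoiding `P`. -/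
def cardS {d a : ℕ} (P : (Fin d → Fin a) → Bool) (n : ℕ) : ℕ :=
  Nat.card {M : (Fin d → Fin n) → Bool // isPermTensor M ∧ ¬ containsT P M}

/-- `|T_P(u)|`: the number of `d`-dimensional binary matrices of size `u × ⋯ × u` avoiding `P`. -/
def cardT {d a : ℕ} (P : (Fin d → Fin a) → Bool) (u : ℕ) : ℕ :=
  Nat.card {M : (Fin d → Fin u) → Bool // ¬ containsT P M}

/-- `I^d_k`: the `d`-dimensional `k`-permutation matrix with 1-entries at `(i,…,i)`. -/
def diagT (d k : ℕ) : (Fin d → Fin k) → Bool :=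
  fun x => decide (∃ a : Fin k, ∀ i, x i = a)

/-!
Interleave `l` permutation matrices `M₀, …, M_{l-1}` of size `m` avoiding `I₂`: in coordinate
`i`, choose a coloring of `[lm]` with `l` colors of `m` elements each, and place `M_k` on the
`k`-th color class. A chain of `l + 1` one-entries has two entries coming from the same `M_k`,
and these form an `I₂` in `M_k`; so the result avoids `I_{l+1}`. With the coloring of the first
coordinate fixed, the result determines the `M_k` and the other `d - 1` colorings. Finally a
bijection `[lm] ≃ [l] × [m]` is such a coloring together with an ordering of each color class,
so there are at least `(lm)!/(m!)^l` colorings.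
-/


open Finset

@[ext]
structure BalancedColoring (l m : ℕ) where
  color : Fin (l * m) → Fin l
  card_fiber : ∀ k, #{y | color y = k} = m

namespace BalancedColoring

variable {l m : ℕ}

instance : Finite (BalancedColoring l m) :=
  Finite.of_injective color fun _ _ => BalancedColoring.ext

def fiberEmb (c : BalancedColoring l m) (k : Fin l) : Fin m ↪o Fin (l * m) :=
  ({y | c.color y = k} : Finset _).orderEmbOfFin (c.card_fiber k)

variable (c : BalancedColoring l m)

@[simp]
theorem apply_fiberEmb (k : Fin l) (b : Fin m) : c.color (c.fiberEmb k b) = k :=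
  (mem_filter.mp (orderEmbOfFin_mem _ (c.card_fiber k) b)).2

theorem exists_fiberEmb_eq (y : Fin (l * m)) : ∃ b, c.fiberEmb (c.color y) b = y := by
  have hy : y ∈ (({z | c.color z = c.color y} : Finset _) : Set (Fin (l * m))) := by simp
  rwa [← range_orderEmbOfFin _ (c.card_fiber (c.color y))] at hy

theorem fiberEmb_inj {k k' : Fin l} {b b' : Fin m} :
    c.fiberEmb k b = c.fiberEmb k' b' ↔ k = k' ∧ b = b' := by
  refine ⟨fun h => ?_, fun ⟨hk, hb⟩ => hk ▸ hb ▸ rfl⟩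
  obtain rfl : k = k' := by rw [← c.apply_fiberEmb k b, h, apply_fiberEmb]
  exact ⟨rfl, (c.fiberEmb k).injective h⟩

def fiberEquiv : Fin l × Fin m ≃ Fin (l * m) :=
  Equiv.ofBijective (fun p => c.fiberEmb p.1 p.2)
    ⟨fun _ _ h => Prod.ext_iff.mpr (c.fiberEmb_inj.mp h),
      fun y => ⟨(c.color y, (c.exists_fiberEmb_eq y).choose),
        (c.exists_fiberEmb_eq y).choose_spec⟩⟩

@[simp]
theorem fiberEquiv_apply (p : Fin l × Fin m) : c.fiberEquiv p = c.fiberEmb p.1 p.2 := rfl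

def ofEquiv (e : Fin (l * m) ≃ Fin l × Fin m) : BalancedColoring l m :=
  ⟨fun y => (e y).1, fun k => by
    have := Fintype.card_congr ((e.subtypeEquiv fun _ => Iff.rfl).trans
      { toFun := fun z => z.1.2
        invFun := fun b => ⟨(k, b), rfl⟩
        left_inv := by rintro ⟨⟨k', b⟩, rfl⟩; rfl
        right_inv := fun _ => rfl : {z : Fin l × Fin m // z.1 = k} ≃ Fin m })
    simpa [Fintype.card_subtype] using this⟩

def rankInFiber (e : Fin (l * m) ≃ Fin l × Fin m) (k : Fin l) : Fin m ↪ Fin m :=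
  ⟨fun b => (e ((ofEquiv e).fiberEmb k b)).2, fun b b' h => by
    have h' : e ((ofEquiv e).fiberEmb k b) = e ((ofEquiv e).fiberEmb k b') :=
      Prod.ext (((ofEquiv e).apply_fiberEmb k b).trans ((ofEquiv e).apply_fiberEmb k b').symm) h
    exact ((ofEquiv e).fiberEmb k).injective (e.injective h')⟩

theorem apply_eq_rankInFiber (e : Fin (l * m) ≃ Fin l × Fin m) (y : Fin (l * m)) {b : Fin m}
    (hb : (ofEquiv e).fiberEmb ((ofEquiv e).color y) b = y) :
    e y = ((ofEquiv e).color y, rankInFiber e ((ofEquiv e).color y) b) :=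
  Prod.ext rfl (congrArg (fun z => (e z).2) hb).symm

theorem injective_ofEquiv_rankInFiber :
    Function.Injective fun e : Fin (l * m) ≃ Fin l × Fin m => (ofEquiv e, rankInFiber e) := by
  intro e e' h
  obtain ⟨hc, hr⟩ := Prod.mk.inj h
  ext1 y
  obtain ⟨b, hb⟩ := (ofEquiv e).exists_fiberEmb_eq y
  have hb' := hb
  rw [hc] at hb'
  rw [apply_eq_rankInFiber e y hb, apply_eq_rankInFiber e' y hb', hc, hr]

theorem factorial_div_le_card :
    (l * m).factorial / m.factorial ^ l ≤ Nat.card (BalancedColoring l m) := by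
  classical
  refine Nat.div_le_of_le_mul ?_
  have h := Nat.card_le_card_of_injective _ (injective_ofEquiv_rankInFiber (l := l) (m := m))
  rw [Nat.card_prod, Nat.card_fun, Nat.card_eq_fintype_card (α := _ ≃ _),
    Fintype.card_equiv finProdFinEquiv.symm, Nat.card_eq_fintype_card (α := Fin m ↪ Fin m),
    Fintype.card_embedding_eq] at h
  simpa [Nat.descFactorial_self, mul_comm] using h

end BalancedColoring

theorem containsT_diagT_iff {d k n : ℕ} (A : (Fin d → Fin n) → Bool) :
    containsT (diagT d k) A ↔
      ∃ x : Fin k → Fin d → Fin n,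
        (∀ i, StrictMono fun t => x t i) ∧ ∀ t, A (x t) = true := by
  constructor
  · rintro ⟨f, hf, hA⟩
    exact ⟨fun t i => f i t, hf, fun t => hA _ (decide_eq_true ⟨t, fun _ => rfl⟩)⟩
  · rintro ⟨x, hx, hA⟩
    refine ⟨fun i t => x t i, hx, fun y hy => ?_⟩
    obtain ⟨t, rfl⟩ : ∃ t, y = fun _ => t := by simpa [diagT, funext_iff] using hy
    exact hA t

theorem containsT_diagT_two_of_lt {d n : ℕ} {A : (Fin d → Fin n) → Bool}
    {y z : Fin d → Fin n} (hyz : ∀ i, y i < z i) (hy : A y = true) (hz : A z = true) :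
    containsT (diagT d 2) A := by
  refine (containsT_diagT_iff A).mpr ⟨![y, z], fun i => ?_, fun t => ?_⟩
  · simpa [Fin.strictMono_iff_lt_succ] using hyz i
  · fin_cases t <;> assumption

theorem isPermTensor.exists_apply_eq {d n : ℕ} {M : (Fin d → Fin n) → Bool}
    (hM : isPermTensor M) (i : Fin d) (b : Fin n) : ∃ y, M y = true ∧ y i = b := by
  obtain ⟨π, hπ⟩ := hM
  exact ⟨fun j => π j ((π i).symm b), (hπ _).mpr ⟨_, fun _ => rfl⟩, by simp⟩

abbrev AvoidingPermTensor {d a : ℕ} (P : (Fin d → Fin a) → Bool) (n : ℕ) : Type :=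
  {M : (Fin d → Fin n) → Bool // isPermTensor M ∧ ¬ containsT P M}

section Merge

open BalancedColoring

variable {d l m : ℕ}

/-- The interleaving of `l` matrices of size `m`: in coordinate `i`, the `k`-th matrix is placed
on the `k`-th color class of `c i`. -/
def merge (M : Fin l → (Fin d → Fin m) → Bool) (c : Fin d → BalancedColoring l m)
    (x : Fin d → Fin (l * m)) : Bool :=
  open Classical in decide (∃ k y, M k y = true ∧ ∀ i, (c i).fiberEmb k (y i) = x i)

variable {M M' : Fin l → (Fin d → Fin m) → Bool} {c c' : Fin d → BalancedColoring l m}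

theorem merge_eq_true_iff {x : Fin d → Fin (l * m)} :
    merge M c x = true ↔ ∃ k y, M k y = true ∧ ∀ i, (c i).fiberEmb k (y i) = x i := by
  simp [merge]

theorem merge_fiberEmb [Nonempty (Fin d)] (k : Fin l) (y : Fin d → Fin m) :
    merge M c (fun i => (c i).fiberEmb k (y i)) = M k y := by
  rw [Bool.eq_iff_iff, merge_eq_true_iff]
  refine ⟨fun ⟨k', y', hM, hy'⟩ => ?_, fun hM => ⟨k, y, hM, fun _ => rfl⟩⟩
  obtain rfl : k' = k := ((c _).fiberEmb_inj.mp (hy' (Classical.arbitrary _))).1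
  obtain rfl : y' = y := funext fun i => ((c i).fiberEmb_inj.mp (hy' i)).2
  exact hM

theorem eq_of_merge_eq [Nonempty (Fin d)] (h : merge M c = merge M' c) : M = M' := by
  funext k y
  have := congrFun h fun i => (c i).fiberEmb k (y i)
  rwa [merge_fiberEmb, merge_fiberEmb] at this

/-- Every line of a permutation matrix is occupied, so the color classes of the merge in any
coordinate can be read off from those in the coordinate `i₀`. -/
theorem coloring_eq_of_merge_eq (hM : ∀ k, isPermTensor (M k)) (i₀ : Fin d)
    (h₀ : c i₀ = c' i₀) (h : merge M c = merge M' c') : c = c' := by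
  have : Nonempty (Fin d) := ⟨i₀⟩
  ext i y : 3
  obtain ⟨b, hb⟩ := (c i).exists_fiberEmb_eq y
  obtain ⟨z, hz, rfl⟩ := (hM ((c i).color y)).exists_apply_eq i b
  have hx : merge M' c' (fun j => (c j).fiberEmb ((c i).color y) (z j)) = true := by
    rwa [← h, merge_fiberEmb]
  obtain ⟨k', z', -, hz'⟩ := merge_eq_true_iff.mp hx
  have hk' : k' = (c i).color y := by
    rw [← (c' i₀).apply_fiberEmb k' (z' i₀), hz' i₀, ← h₀, apply_fiberEmb]
  calc (c i).color y = k' := hk'.symm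
    _ = (c' i).color y := by rw [← hb, ← hz' i, apply_fiberEmb]

theorem isPermTensor_merge (hM : ∀ k, isPermTensor (M k)) : isPermTensor (merge M c) := by
  choose π hπ using hM
  refine ⟨fun i => finProdFinEquiv.symm.trans
    ((Equiv.prodCongrRight fun k => π k i).trans (c i).fiberEquiv), fun x => ?_⟩
  rw [merge_eq_true_iff]
  constructor
  · rintro ⟨k, y, hy, hx⟩
    obtain ⟨b, hb⟩ := (hπ k y).mp hy
    exact ⟨finProdFinEquiv (k, b), fun i => by simp [← hx i, hb]⟩
  · rintro ⟨a, ha⟩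
    refine ⟨(finProdFinEquiv.symm a).1, fun i => π _ i (finProdFinEquiv.symm a).2,
      (hπ _ _).mpr ⟨_, fun _ => rfl⟩, fun i => ?_⟩
    simp [ha i]

theorem not_containsT_merge (hM : ∀ k, ¬ containsT (diagT d 2) (M k)) :
    ¬ containsT (diagT d (l + 1)) (merge M c) := by
  rw [containsT_diagT_iff]
  rintro ⟨x, hx, hA⟩
  choose K y hy hxy using fun t => merge_eq_true_iff.mp (hA t)
  obtain ⟨s, t, hne, hK⟩ := Fintype.exists_ne_map_eq_of_card_lt K (by simp)
  wlog hst : s < t generalizing s t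
  · exact this t s hne.symm hK.symm (hne.lt_or_gt.resolve_left hst)
  refine hM (K t) (containsT_diagT_two_of_lt (fun i => ?_) (hK ▸ hy s) (hy t))
  have : x s i < x t i := hx i hst
  rwa [← hxy s i, ← hxy t i, hK, OrderEmbedding.lt_iff_lt] at this

end Merge

theorem stmt14_general (d l m : ℕ) (hd : 1 ≤ d) :
    cardS (diagT d 2) m ^ l * ((l * m).factorial / m.factorial ^ l) ^ (d - 1)
      ≤ cardS (diagT d (l + 1)) (l * m) := by
  obtain ⟨d, rfl⟩ := Nat.exists_eq_add_of_le' hd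
  rw [Nat.add_sub_cancel]
  let c₀ : BalancedColoring l m := .ofEquiv finProdFinEquiv.symm
  let F (p : (Fin l → AvoidingPermTensor (diagT (d + 1) 2) m) ×
      (Fin d → BalancedColoring l m)) : AvoidingPermTensor (diagT (d + 1) (l + 1)) (l * m) :=
    ⟨merge (fun k => (p.1 k).1) (Fin.cons c₀ p.2 : Fin (d + 1) → BalancedColoring l m),
      isPermTensor_merge fun k => (p.1 k).2.1, not_containsT_merge fun k => (p.1 k).2.2⟩
  have hF : F.Injective := by
    rintro ⟨M, c⟩ ⟨M', c'⟩ h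
    replace h : merge _ (Fin.cons c₀ c) = merge _ (Fin.cons c₀ c') := congrArg Subtype.val h
    have hc : (Fin.cons c₀ c : Fin (d + 1) → _) = Fin.cons c₀ c' :=
      coloring_eq_of_merge_eq (fun k => (M k).2.1) 0 rfl h
    obtain rfl : c = c' := (Fin.cons_inj.mp hc).2
    obtain rfl : M = M' := funext fun k => Subtype.ext (congrFun (eq_of_merge_eq h) k)
    rfl
  calc _ ≤ cardS (diagT (d + 1) 2) m ^ l * Nat.card (BalancedColoring l m) ^ d := by
        gcongr; exact BalancedColoring.factorial_div_le_card
    _ = Nat.card ((Fin l → AvoidingPermTensor (diagT (d + 1) 2) m) ×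
          (Fin d → BalancedColoring l m)) := by
        rw [Nat.card_prod, Nat.card_fun, Nat.card_fun, Nat.card_fin, Nat.card_fin]; rfl
    _ ≤ _ := Nat.card_le_card_of_injective F hF

/-- Merging bound: `|S_{I^d_{l+1}}(lm)| ≥ |S_{I^d_2}(m)|^l · ((lm)!/(m!)^l)^(d-1)`. -/
theorem stmt14 (d l m : ℕ) (hd : 1 ≤ d) (hl : 1 ≤ l) (hm : 1 ≤ m) :
    cardS (diagT d 2) m ^ l * ((l * m).factorial / m.factorial ^ l) ^ (d - 1)
      ≤ cardS (diagT d (l + 1)) (l * m) :=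
  stmt14_general d l m hd
end
end

section
/- Every d-dimensional k-permutation matrix contains a monotone d-dimensional ⌈k^{1/2^{d−1}}⌉-permutation matrix. -/
open Asymptotics

noncomputable section

/-- `M` is a monotone `d`-dimensional `m`-permutation matrix: its 1-entries can be listed
so that each coordinate is strictly increasing or strictly decreasing. -/
def isMonotonePermTensor {d m : ℕ} (M : (Fin d → Fin m) → Bool) : Prop :=
  ∃ g : Fin d → (Fin m → Fin m), (∀ i, StrictMono (g i) ∨ StrictAnti (g i)) ∧
    ∀ x, (M x = true ↔ ∃ a, ∀ i, x i = g i a)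

section Aux

variable {α : Type*} [LinearOrder α]

open Function Finset in
/-- **Erdős–Szekeres** (adapted from the mathlib Archive). -/
theorem my_erdos_szekeres {r s n : ℕ} {f : Fin n → α} (hn : r * s < n) (hf : Injective f) :
    (∃ t : Finset (Fin n), r < #t ∧ StrictMonoOn f ↑t) ∨
      ∃ t : Finset (Fin n), s < #t ∧ StrictAntiOn f ↑t := by
  let inc_sequences_ending_in : Fin n → Finset (Finset (Fin n)) := fun i =>
    univ.powerset.filter fun t => Finset.max t = i ∧ StrictMonoOn f ↑t
  let dec_sequences_ending_in : Fin n → Finset (Finset (Fin n)) := fun i =>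
    univ.powerset.filter fun t => Finset.max t = i ∧ StrictAntiOn f ↑t
  have inc_i : ∀ i, {i} ∈ inc_sequences_ending_in i := fun i => by
    simp [inc_sequences_ending_in, StrictMonoOn]
  have dec_i : ∀ i, {i} ∈ dec_sequences_ending_in i := fun i => by
    simp [dec_sequences_ending_in, StrictAntiOn]
  let ab' : Fin n → ℕ × ℕ := by
    intro i
    apply
      (max' ((inc_sequences_ending_in i).image card) (Nonempty.image ⟨{i}, inc_i i⟩ _),
        max' ((dec_sequences_ending_in i).image card) (Nonempty.image ⟨{i}, dec_i i⟩ _))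
  generalize hab : ab' = ab
  rsuffices ⟨i, hi⟩ : ∃ i, r < (ab i).1 ∨ s < (ab i).2
  · refine Or.imp ?_ ?_ hi
    on_goal 1 =>
      have : (ab i).1 ∈ image card (inc_sequences_ending_in i) := by
        simp only [← hab]; exact max'_mem _ (Nonempty.image ⟨{i}, inc_i i⟩ _)
    on_goal 2 =>
      have : (ab i).2 ∈ image card (dec_sequences_ending_in i) := by
        simp only [← hab]; exact max'_mem _ (Nonempty.image ⟨{i}, dec_i i⟩ _)
    all_goals
      intro hi
      rw [mem_image] at this
      obtain ⟨t, ht₁, ht₂⟩ := this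
      refine ⟨t, by rwa [ht₂], ?_⟩
      rw [mem_filter] at ht₁
      apply ht₁.2.2
  have : Injective ab := by
    simp only [← hab]
    apply Injective.of_lt_imp_ne
    intro i j k q
    injection q with q₁ q₂
    cases lt_or_gt_of_ne fun _ => ne_of_lt ‹i < j› (hf ‹f i = f j›)
    on_goal 1 =>
      apply ne_of_lt _ q₁
      have : (ab' i).1 ∈ image card (inc_sequences_ending_in i) := by exact max'_mem _ (Nonempty.image ⟨{i}, inc_i i⟩ _)
    on_goal 2 =>
      apply ne_of_lt _ q₂
      have : (ab' i).2 ∈ image card (dec_sequences_ending_in i) := by exact max'_mem _ (Nonempty.image ⟨{i}, dec_i i⟩ _)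
    all_goals
      rw [Nat.lt_iff_add_one_le]
      apply le_max'
      rw [mem_image] at this ⊢
      rcases this with ⟨t, ht₁, ht₂⟩
      rw [mem_filter] at ht₁
      have : t.max = i := by simp only [ht₁.2.1]
      refine ⟨insert j t, ?_, ?_⟩
      · rw [mem_filter]
        refine ⟨?_, ?_, ?_⟩
        · rw [mem_powerset]; apply subset_univ
        · convert max_insert (a := j) (s := t)
          rw [ht₁.2.1, max_eq_left]
          apply WithBot.coe_le_coe.mpr (le_of_lt ‹i < j›)
        simp only [StrictMonoOn, StrictAntiOn, coe_insert, Set.mem_insert_iff, mem_coe]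
        rintro x ⟨rfl | _⟩ y ⟨rfl | _⟩ _
        · apply (irrefl _ ‹j < j›).elim
        · exfalso
          apply not_le_of_gt (_root_.trans ‹i < j› ‹j < y›) (le_max_of_eq ‹y ∈ t› ‹t.max = i›)
        · first
          | apply lt_of_le_of_lt _ ‹f i < f j›
          | apply lt_of_lt_of_le ‹f j < f i› _
          rcases lt_or_eq_of_le (le_max_of_eq ‹x ∈ t› ‹t.max = i›) with (_ | rfl)
          · apply le_of_lt (ht₁.2.2 ‹x ∈ t› (mem_of_max ‹t.max = i›) ‹x < i›)
          · rfl
        · apply ht₁.2.2 ‹x ∈ t› ‹y ∈ t› ‹x < y›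
      · rw [card_insert_of_notMem, ht₂]
        intro
        apply not_le_of_gt ‹i < j› (le_max_of_eq ‹j ∈ t› ‹t.max = i›)
  by_contra! q
  let ran : Finset (ℕ × ℕ) := (range r).image Nat.succ ×ˢ (range s).image Nat.succ
  have : image ab univ ⊆ ran := by
    rintro ⟨x₁, x₂⟩
    simp only [ran, mem_image, exists_prop, mem_range, mem_univ, mem_product, true_and,
      Prod.ext_iff]
    rintro ⟨i, rfl, rfl⟩
    specialize q i
    have z : 1 ≤ (ab i).1 ∧ 1 ≤ (ab i).2 := by
      simp only [← hab]
      constructor <;>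
        · apply le_max'
          rw [mem_image]
          exact ⟨{i}, by solve_by_elim, card_singleton i⟩
    exact ⟨⟨(ab i).1 - 1, by omega⟩, (ab i).2 - 1, by omega⟩
  apply not_le_of_gt hn
  simpa [ran, Nat.succ_injective, card_image_of_injective, ‹Injective ab›] using card_le_card this

/-- Extract a strictly monotone indexed subsequence of length `m` from a finset of size ≥ m. -/
theorem subseq_of_finset_mono {n m : ℕ} {f : Fin n → α} {t : Finset (Fin n)} (ht : m ≤ t.card)
    (h : StrictMonoOn f ↑t) : ∃ g : Fin m → Fin n, StrictMono g ∧ StrictMono (f ∘ g) := by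
  have hm : ∀ a : Fin m, t.orderEmbOfFin rfl (Fin.castLE ht a) ∈ t := fun a =>
    Finset.orderEmbOfFin_mem t rfl _
  refine ⟨fun a => t.orderEmbOfFin rfl (Fin.castLE ht a),
    fun a b hab => (t.orderEmbOfFin rfl).strictMono (by exact hab), fun a b hab => ?_⟩
  exact h (hm a) (hm b) ((t.orderEmbOfFin rfl).strictMono (by exact hab))

theorem subseq_of_finset_anti {n m : ℕ} {f : Fin n → α} {t : Finset (Fin n)} (ht : m ≤ t.card)
    (h : StrictAntiOn f ↑t) : ∃ g : Fin m → Fin n, StrictMono g ∧ StrictAnti (f ∘ g) := by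
  have hm : ∀ a : Fin m, t.orderEmbOfFin rfl (Fin.castLE ht a) ∈ t := fun a =>
    Finset.orderEmbOfFin_mem t rfl _
  refine ⟨fun a => t.orderEmbOfFin rfl (Fin.castLE ht a),
    fun a b hab => (t.orderEmbOfFin rfl).strictMono (by exact hab), fun a b hab => ?_⟩
  exact h (hm a) (hm b) ((t.orderEmbOfFin rfl).strictMono (by exact hab))

/-- Quantitative Erdős–Szekeres: a monotone subsequence of length `m` exists whenever
`(m-1)² < n`. -/
theorem erdos_szekeres_mono {n m : ℕ} {f : Fin n → α} (hn : (m - 1) * (m - 1) < n)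
    (hf : Function.Injective f) :
    ∃ g : Fin m → Fin n, StrictMono g ∧ (StrictMono (f ∘ g) ∨ StrictAnti (f ∘ g)) := by
  rcases my_erdos_szekeres hn hf with ⟨t, ht, hmono⟩ | ⟨t, ht, hanti⟩
  · obtain ⟨g, hg0, hg⟩ := subseq_of_finset_mono (m := m) (by omega) hmono
    exact ⟨g, hg0, Or.inl hg⟩
  · obtain ⟨g, hg0, hg⟩ := subseq_of_finset_anti (m := m) (by omega) hanti
    exact ⟨g, hg0, Or.inr hg⟩

theorem fin_rev_strictAnti (n : ℕ) : StrictAnti (Fin.rev : Fin n → Fin n) :=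
  fun _ _ h => Fin.rev_lt_rev.mpr h

/-- The iterated Erdős–Szekeres argument:  after `t+1` rounds one finds an injective sequence of
length at least `k^(1/2^t)` along which the first `t+1` coordinate permutations are monotone. -/
theorem key_step {d k : ℕ} (hd : 1 ≤ d) (hk : 1 ≤ k) (π : Fin d → Equiv.Perm (Fin k)) :
    ∀ t : ℕ, t < d → ∃ (ℓ : ℕ) (e : Fin ℓ → Fin k), Function.Injective e ∧
      (∀ i : Fin d, (i : ℕ) ≤ t → StrictMono (⇑(π i) ∘ e) ∨ StrictAnti (⇑(π i) ∘ e)) ∧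
      (k : ℝ) ^ ((1 : ℝ) / 2 ^ t) ≤ ℓ := by
  intro t
  induction t with
  | zero =>
    intro _
    refine ⟨k, ⇑(π ⟨0, hd⟩).symm, (π ⟨0, hd⟩).symm.injective, ?_, by simp⟩
    intro i hi
    have hi0 : (i : ℕ) = 0 := Nat.le_zero.mp hi
    have : i = ⟨0, hd⟩ := by ext; simp [hi0]
    subst this
    left
    have : ⇑(π ⟨0, hd⟩) ∘ ⇑(π ⟨0, hd⟩).symm = id := by
      funext a; simp
    rw [this]
    exact strictMono_id
  | succ t ih =>
    intro ht
    obtain ⟨ℓ, e, hinj, hmono, hb⟩ := ih (by omega)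
    have hk' : (1 : ℝ) ≤ (k : ℝ) ^ ((1 : ℝ) / 2 ^ t) :=
      Real.one_le_rpow (by exact_mod_cast hk) (by positivity)
    have hℓ1 : 1 ≤ ℓ := by exact_mod_cast hk'.trans hb
    set m := ⌈Real.sqrt ℓ⌉₊ with hm
    have hm1 : 1 ≤ m := by
      rw [hm, Nat.one_le_ceil_iff]
      exact Real.sqrt_pos.mpr (by exact_mod_cast hℓ1)
    -- (m-1)² < ℓ
    have hlt : ((m - 1 : ℕ) : ℝ) < Real.sqrt ℓ := Nat.lt_ceil.mp (by omega)
    have hES : (m - 1) * (m - 1) < ℓ := by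
      have h2 : ((m - 1 : ℕ) : ℝ) * ((m - 1 : ℕ) : ℝ) < Real.sqrt ℓ * Real.sqrt ℓ :=
        mul_self_lt_mul_self (by positivity) hlt
      rw [Real.mul_self_sqrt (by positivity)] at h2
      exact_mod_cast h2
    have hinj' : Function.Injective (⇑(π ⟨t + 1, ht⟩) ∘ e) :=
      (π ⟨t + 1, ht⟩).injective.comp hinj
    obtain ⟨σ, hσmono, hσ⟩ := erdos_szekeres_mono (f := ⇑(π ⟨t + 1, ht⟩) ∘ e) hES hinj'
    refine ⟨m, e ∘ σ, hinj.comp hσmono.injective, ?_, ?_⟩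
    · intro i hi
      rcases Nat.lt_or_ge (i : ℕ) (t + 1) with h' | h'
      · rcases hmono i (by omega) with h | h
        · exact Or.inl (fun a b hab => h (hσmono hab))
        · exact Or.inr (fun a b hab => h (hσmono hab))
      · have hi1 : (i : ℕ) = t + 1 := by omega
        have : i = ⟨t + 1, ht⟩ := by ext; simp [hi1]
        subst this
        exact hσ.imp (fun h a b hab => h hab) (fun h a b hab => h hab)
    · have h1 : Real.sqrt ((k : ℝ) ^ ((1 : ℝ) / 2 ^ t)) ≤ Real.sqrt ℓ :=
        Real.sqrt_le_sqrt hb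
      have h2 : Real.sqrt ((k : ℝ) ^ ((1 : ℝ) / 2 ^ t)) = (k : ℝ) ^ ((1 : ℝ) / 2 ^ (t + 1)) := by
        rw [Real.sqrt_eq_rpow, ← Real.rpow_mul (Nat.cast_nonneg k)]
        congr 1
        rw [pow_succ]
        ring
      calc (k : ℝ) ^ ((1 : ℝ) / 2 ^ (t + 1)) = _ := h2.symm
        _ ≤ Real.sqrt ℓ := h1
        _ ≤ m := Nat.le_ceil _

end Aux

/-- Every `d`-dimensional `k`-permutation matrix contains a monotone `d`-dimensional
`⌈k^(1/2^(d-1))⌉`-permutation matrix. -/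
theorem stmt15 (d k : ℕ) (hd : 1 ≤ d) (hk : 1 ≤ k)
    (P : (Fin d → Fin k) → Bool) (hP : isPermTensor P) :
    ∃ M : (Fin d → Fin ⌈(k : ℝ) ^ ((1 : ℝ) / 2 ^ (d - 1))⌉₊) → Bool,
      isMonotonePermTensor M ∧ containsT M P := by
  obtain ⟨π, hπ⟩ := hP
  obtain ⟨ℓ, e, hinj, hmono, hb⟩ := key_step hd hk π (d - 1) (by omega)
  set m₀ := ⌈(k : ℝ) ^ ((1 : ℝ) / 2 ^ (d - 1))⌉₊ with hm₀
  have hle : m₀ ≤ ℓ := Nat.ceil_le.mpr hb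
  -- truncate
  set e' : Fin m₀ → Fin k := e ∘ Fin.castLE hle with he'
  have hcast : StrictMono (Fin.castLE hle : Fin m₀ → Fin ℓ) := fun _ _ hab => hab
  have hmono' : ∀ i : Fin d, StrictMono (⇑(π i) ∘ e') ∨ StrictAnti (⇑(π i) ∘ e') := by
    intro i
    rcases hmono i (by omega) with h | h
    · exact Or.inl (fun a b hab => h (hcast hab))
    · exact Or.inr (fun a b hab => h (hcast hab))
  classical
  set g : Fin d → Fin m₀ → Fin m₀ := fun i =>
    if StrictMono (⇑(π i) ∘ e') then id else Fin.rev with hg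
  have hgg : ∀ i a, g i (g i a) = a := by
    intro i a
    by_cases h : StrictMono (⇑(π i) ∘ e') <;> simp [hg, h, Fin.rev_rev]
  have hgma : ∀ i, StrictMono (g i) ∨ StrictAnti (g i) := by
    intro i
    by_cases h : StrictMono (⇑(π i) ∘ e')
    · simp only [hg, if_pos h]; exact Or.inl strictMono_id
    · simp only [hg, if_neg h]; exact Or.inr (fin_rev_strictAnti m₀)
  set f : Fin d → Fin m₀ → Fin k := fun i => ⇑(π i) ∘ e' ∘ g i with hf
  have hfmono : ∀ i, StrictMono (f i) := by
    intro i
    by_cases h : StrictMono (⇑(π i) ∘ e')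
    · simp only [hf, hg, if_pos h]
      exact fun a b hab => h hab
    · have hanti : StrictAnti (⇑(π i) ∘ e') := (hmono' i).resolve_left h
      simp only [hf, hg, if_neg h]
      exact fun a b hab => hanti (fin_rev_strictAnti m₀ hab)
  refine ⟨fun x => decide (∃ a, ∀ i, x i = g i a), ⟨g, hgma, fun x => by
    simp⟩, f, hfmono, ?_⟩
  intro x hx
  simp only [decide_eq_true_eq] at hx
  obtain ⟨a, ha⟩ := hx
  rw [hπ]
  refine ⟨e' a, fun i => ?_⟩
  rw [ha i]
  simp only [hf, Function.comp_apply, hgg]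

end
end

section
/- For k ≥ 9, 2·k²·k!/⌈4·log₂ k / log₂ log₂ k⌉! ≤ k! · 2^{1 − 2·log₂ k + o(log₂ k)}; in particular 2k²·k!/⌈4 log₂ k/log₂ log₂ k⌉! = o(k!) as k → ∞. -/
open Asymptotics Filter Real Topology
open scoped Nat

/-!
With `L = log₂ k` and `r = ⌈4L / log₂ L⌉`, the bounds `n log n - n ≤ log n! ≤ n log n` give
`log r! ~ r log r ~ (4L / log₂ L) · log L = 4L log 2`, i.e. `log₂ r! = 4L + o(L)`. Taking
`ε = 4L - log₂ r!` makes the inequality an equality, and the exponent `1 - 2L + ε ~ -2L`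
tends to `-∞`, so `2k²/r! → 0`.
-/

lemma isEquivalent_log_factorial :
    (fun n : ℕ => log n !) ~[atTop] fun n => n * log n := by
  have hdiff : (fun n : ℕ => log n ! - n * log n) =O[atTop] fun n => (n : ℝ) := by
    refine IsBigO.of_bound 1 ?_
    filter_upwards [eventually_ne_atTop 0] with n hn
    have hlower := Stirling.le_log_factorial_stirling hn
    have hupper : log n ! ≤ n * log n := by
      rw [← log_pow]
      exact log_le_log (by positivity) (by exact_mod_cast Nat.factorial_le_pow n)
    have hlog_n : 0 ≤ log n := log_natCast_nonneg n
    have hlog_2π : 0 ≤ log (2 * π) := log_nonneg (by linarith [pi_gt_three])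
    rw [norm_eq_abs, norm_eq_abs, abs_le, abs_of_nonneg (Nat.cast_nonneg n)]
    constructor <;> linarith
  have hlog : (fun _ : ℕ => (1 : ℝ)) =o[atTop] fun n => log n :=
    isLittleO_const_log_atTop.comp_tendsto tendsto_natCast_atTop_atTop
  refine hdiff.trans_isLittleO ?_
  simpa using (isBigO_refl (fun n : ℕ => (n : ℝ)) atTop).mul_isLittleO hlog

lemma isEquivalent_natCeil {α : Type*} {l : Filter α} {f : α → ℝ} (hf : Tendsto f l atTop) :
    (fun x => (⌈f x⌉₊ : ℝ)) ~[l] f :=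
  isEquivalent_of_tendsto_one (tendsto_nat_ceil_div_atTop.comp hf)

lemma Asymptotics.IsEquivalent.log_factorial {α : Type*} {l : Filter α} {r : α → ℕ} {g : α → ℝ}
    (hrg : (fun x => (r x : ℝ)) ~[l] g) (hg : Tendsto g l atTop) :
    (fun x => Real.log (r x)!) ~[l] fun x => g x * Real.log (g x) := by
  have hr : Tendsto r l atTop :=
    tendsto_natCast_atTop_iff.mp (hrg.symm.tendsto_atTop hg)
  exact (isEquivalent_log_factorial.comp_tendsto hr).trans (hrg.mul (hrg.log hg))

lemma isEquivalent_log_mul_div_log {a : ℝ} (ha : 0 < a) :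
    (fun y => log (a * y / log y)) ~[atTop] log := by
  refine IsLittleO.isEquivalent ?_
  have hloglog : (fun y => log (log y)) =o[atTop] log :=
    isLittleO_log_id_atTop.comp_tendsto tendsto_log_atTop
  refine ((isLittleO_const_log_atTop (c := log a)).sub hloglog).congr' ?_ EventuallyEq.rfl
  filter_upwards [eventually_gt_atTop 1] with y hy
  have hlog_y : 0 < log y := log_pos hy
  simp only [Pi.sub_apply]
  rw [log_div (by positivity) hlog_y.ne', log_mul ha.ne' (by positivity)]
  ring

lemma isEquivalent_logb_factorial_ceil {c : ℝ} (hc : 0 < c) :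
    (fun y => logb 2 (⌈c * y / logb 2 y⌉₊)!) ~[atTop] fun y => c * y := by
  set a := c * log 2
  have hg : ∀ y, c * y / logb 2 y = a * y / log y := fun y => by
    rw [logb, div_div_eq_mul_div]; ring
  have hg_top : Tendsto (fun y => a * y / log y) atTop atTop := by
    have hexp : Tendsto (fun t => exp t / t) atTop atTop := by
      simpa using tendsto_exp_div_pow_atTop 1
    have hdiv : Tendsto (fun y => y / log y) atTop atTop := by
      refine (hexp.comp tendsto_log_atTop).congr' ?_
      filter_upwards [eventually_gt_atTop 0] with y hy
      simp [exp_log hy]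
    simpa only [mul_div_assoc] using hdiv.const_mul_atTop (by positivity)
  have hceil : (fun y => (⌈c * y / logb 2 y⌉₊ : ℝ)) ~[atTop] fun y => a * y / log y := by
    simp_rw [hg]
    exact isEquivalent_natCeil hg_top
  have hlog_fact := (hceil.log_factorial hg_top).trans
    (IsEquivalent.refl.mul (isEquivalent_log_mul_div_log (by positivity)))
  have hsimp : (fun y => a * y / log y) * log =ᶠ[atTop] fun y => a * y := by
    filter_upwards [eventually_gt_atTop 1] with y hy
    have hlog_y := (log_pos hy).ne'
    simp only [Pi.mul_apply]
    field_simp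
  refine ((hlog_fact.trans_eventuallyEq hsimp).div
    (IsEquivalent.refl (u := fun _ => log 2))).congr_right (Eventually.of_forall fun y => ?_)
  simp only [Pi.div_apply, a]
  field_simp

lemma mul_sq_div_eq_rpow_logb {b x y : ℝ} (hb : 0 < b) (hb1 : b ≠ 1) (hx : 0 < x) (hy : 0 < y) :
    b * x ^ 2 / y = b ^ (1 + 2 * logb b x - logb b y) := by
  rw [rpow_sub hb, rpow_add hb, rpow_one, mul_comm 2, rpow_mul hb.le, rpow_logb hb hb1 hx,
    rpow_logb hb hb1 hy, rpow_two]

/-- With `r(k) = ⌈4·log₂ k / log₂ log₂ k⌉`, we have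
`2k²·k!/r(k)! ≤ k!·2^(1 - 2 log₂ k + o(log₂ k))`, and in particular
`2k²·k!/r(k)! = o(k!)` as `k → ∞`. -/
theorem stmt18 :
    (∃ ε : ℕ → ℝ, ε =o[Filter.atTop] (fun k : ℕ => Real.logb 2 k) ∧
      ∀ k : ℕ, 9 ≤ k →
        (2 * (k : ℝ) ^ 2 * (k.factorial : ℝ)) /
            ((⌈4 * Real.logb 2 k / Real.logb 2 (Real.logb 2 k)⌉₊.factorial : ℝ))
          ≤ (k.factorial : ℝ) * (2 : ℝ) ^ ((1 : ℝ) - 2 * Real.logb 2 k + ε k)) ∧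
    (fun k : ℕ => (2 * (k : ℝ) ^ 2 * (k.factorial : ℝ)) /
        ((⌈4 * Real.logb 2 k / Real.logb 2 (Real.logb 2 k)⌉₊.factorial : ℝ)))
      =o[Filter.atTop] (fun k : ℕ => (k.factorial : ℝ)) := by
  set L : ℕ → ℝ := fun k => logb 2 k
  set r : ℕ → ℕ := fun k => ⌈4 * logb 2 k / logb 2 (logb 2 k)⌉₊
  have hL : Tendsto L atTop atTop :=
    (tendsto_logb_atTop one_lt_two).comp tendsto_natCast_atTop_atTop
  have hfact : (fun k => logb 2 (r k)!) ~[atTop] fun k => 4 * L k :=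
    (isEquivalent_logb_factorial_ceil four_pos).comp_tendsto hL
  set ε : ℕ → ℝ := fun k => 4 * L k - logb 2 (r k)!
  have hε : ε =o[atTop] L :=
    (hfact.isLittleO.neg_left.trans_isBigO (isBigO_const_mul_self 4 L atTop)).congr_left
      fun k => by simp [ε]
  have hratio : ∀ k : ℕ, k ≠ 0 →
      2 * (k : ℝ) ^ 2 * k ! / (r k)! = k ! * 2 ^ (1 - 2 * L k + ε k) := by
    intro k hk
    have hk_pos : (0 : ℝ) < k := by positivity
    rw [show 1 - 2 * L k + ε k = 1 + 2 * L k - logb 2 (r k)! by simp only [ε]; ring,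
      ← mul_sq_div_eq_rpow_logb two_pos (by norm_num) hk_pos (by positivity)]
    ring
  refine ⟨⟨ε, hε, fun k hk => (hratio k (by omega)).le⟩, ?_⟩
  have hexp : Tendsto (fun k => 1 - 2 * L k + ε k) atTop atBot := by
    have hone : (fun _ => (1 : ℝ)) =o[atTop] L :=
      (isLittleO_one_left_iff ℝ).2 (tendsto_norm_atTop_atTop.comp hL)
    have hequiv : (fun k => 1 - 2 * L k + ε k) ~[atTop] fun k => -2 * L k :=
      IsLittleO.isEquivalent <| ((isLittleO_const_mul_right_iff (by norm_num)).2
        (hone.add hε)).congr_left fun k => by simp only [Pi.sub_apply]; ring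
    exact hequiv.symm.tendsto_atBot (hL.const_mul_atTop_of_neg (by norm_num))
  have hpow := (isLittleO_one_iff ℝ).2 ((tendsto_rpow_atBot_of_base_gt_one 2 one_lt_two).comp hexp)
  refine (hpow.mul_isBigO (isBigO_refl (fun k : ℕ => (k ! : ℝ)) atTop)).congr' ?_ (by simp)
  filter_upwards [eventually_ne_atTop 0] with k hk
  rw [hratio k hk, mul_comm]
  rfl
end
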